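/- arXiv:math/0404146 — 5 statements merged into one kernel-verified Lean document; each statement's English description precedes it below -/
import Mathlib

section
/- For every regular universality parameter 𝔭, 𝔡 ≤ cof(ℐ_𝔭): if ℬ ⊆ ℐ_𝔭 is a basis of ℐ_𝔭 (every member of ℐ_𝔭 is contained in a member of ℬ), then {φ*(B) : B ∈ ℬ} is a dominating family in (ω^ω, ≤*); hence the dominating number 𝔡 is at most the cofinality of ℐ_𝔭. -/
open Set Filter MeasureTheory NNReal ENNReal

namespace UnivForcing

abbrev Node := List ℕ

/-- `η` is a node respecting `H`: each entry is below the corresponding value of `H`. -/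
def IsHNode (H : ℕ → ℕ) (η : Node) : Prop := ∀ i < η.length, η.getD i 0 < H i

/-- A tree of finite sequences: contains the empty sequence and is closed under prefixes. -/
def IsTreeSet (T : Set Node) : Prop :=
  ([] : Node) ∈ T ∧ ∀ η ∈ T, ∀ ν : Node, ν <+: η → ν ∈ T

/-- The nodes of `T` of length exactly `n`. -/
def levelSet (T : Set Node) (n : ℕ) : Set Node := {η ∈ T | η.length = n}

/-- The nodes of `T` of length at most `n`. -/
def below (T : Set Node) (n : ℕ) : Set Node := {η ∈ T | η.length ≤ n}

/-- A finite `H`-tree of level `N`. -/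
def IsFinTree (H : ℕ → ℕ) (T : Set Node) (N : ℕ) : Prop :=
  IsTreeSet T ∧ (∀ η ∈ T, IsHNode H η ∧ η.length ≤ N) ∧
    ∀ η ∈ T, ∃ ν ∈ T, η <+: ν ∧ ν.length = N

/-- An infinite `H`-tree: a tree of `H`-nodes with no maximal nodes. -/
def IsInfTree (H : ℕ → ℕ) (T : Set Node) : Prop :=
  IsTreeSet T ∧ (∀ η ∈ T, IsHNode H η) ∧ ∀ η ∈ T, ∃ ν ∈ T, η <+: ν ∧ η ≠ ν

/-- A simplified universality parameter (Definition 2.2). -/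
structure UnivParam (H : ℕ → ℕ) where
  G : Set (Set Node × ℕ × ℕ)
  F : ℕ → ℕ
  G_tree : ∀ S a b, (S, a, b) ∈ G → ∃ N, IsFinTree H S N ∧ a ≤ b ∧ b ≤ N
  G_root : ((({([] : Node)}) : Set Node), 0, 0) ∈ G
  G_mono : ∀ S0 a0 b0 N0 S1 N1, (S0, a0, b0) ∈ G → IsFinTree H S0 N0 →
    IsFinTree H S1 N1 → N0 ≤ N1 → levelSet S1 N0 ⊆ S0 →
    ∀ a1 b1, a1 ≤ a0 → b0 ≤ b1 → b1 ≤ N1 → (S1, a1, b1) ∈ G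
  F_incr : StrictMono F
  G_amalg : ∀ S0 a0 b0 S1 a1 b1 N S M,
    (S0, a0, b0) ∈ G → (S1, a1, b1) ∈ G →
    IsFinTree H S0 N → IsFinTree H S1 N → IsFinTree H S M → M < N →
    levelSet S0 M ⊆ S → levelSet S1 M ⊆ S →
    M < a0 → b0 < a1 → F b1 < N →
    ∃ S', (S', a0, F b1) ∈ G ∧ IsFinTree H S' N ∧
      S0 ∪ S1 ⊆ S' ∧ levelSet S' M = levelSet S M

/-- `T` is narrow with respect to the family `G` (Definition 2.3(1)). -/
def IsNarrowG (G : Set (Set Node × ℕ × ℕ)) (T : Set Node) : Prop :=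
  ∀ m, ∃ a, m ≤ a ∧ ∃ b, a < b ∧ (below T (b + 1), a, b) ∈ G

def IsNarrow {H : ℕ → ℕ} (p : UnivParam H) (T : Set Node) : Prop := IsNarrowG p.G T

/-- Suitability of a universality parameter (Definition 3.5(1)). -/
def Suitable {H : ℕ → ℕ} (p : UnivParam H) : Prop :=
  (∀ n, ∃ N, n < N ∧ ∀ S a b NS, (S, a, b) ∈ p.G → IsFinTree H S NS → N ≤ a →
    ∀ η : Node, IsHNode H η → η.length = n →
      ∃ ν : Node, IsHNode H ν ∧ ν.length = NS ∧ η <+: ν ∧ ν ∉ S) ∧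
  (∀ n, ∃ N, n < N ∧ ∀ S, IsFinTree H S n →
    ∀ η : Node, IsHNode H η → η.length = N → η.take n ∈ S →
      ∃ S' a b, (S', a, b) ∈ p.G ∧ n < a ∧ a ≤ b ∧ b < N ∧ S ⊆ S' ∧
        levelSet S' n = levelSet S n ∧ η ∈ S')

/-- The space 𝒳 = ∏_{i<ω} H(i). -/
abbrev XSp (H : ℕ → ℕ) := (i : ℕ) → Fin (H i)

/-- The initial segment of length `n` of a point of 𝒳, as a node. -/
def branchNode (H : ℕ → ℕ) (x : XSp H) (n : ℕ) : Node :=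
  List.ofFn fun i : Fin n => (x i : ℕ)

/-- The set of ω-branches `[T]` of a tree `T`, as a subset of 𝒳. -/
def branches (H : ℕ → ℕ) (T : Set Node) : Set (XSp H) :=
  {x | ∀ n, branchNode H x n ∈ T}

/-- A closed narrow set: the branch set of a narrow infinite `H`-tree. -/
def NarrowClosedG (H : ℕ → ℕ) (G : Set (Set Node × ℕ × ℕ)) (A : Set (XSp H)) : Prop :=
  ∃ T, IsInfTree H T ∧ IsNarrowG G T ∧ A = branches H T

/-- The ideal ℐ⁰ generated by narrow closed sets. -/
def I0G (H : ℕ → ℕ) (G : Set (Set Node × ℕ × ℕ)) : Set (Set (XSp H)) :=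
  {A | ∃ (n : ℕ) (f : Fin n → Set (XSp H)),
    (∀ i, NarrowClosedG H G (f i)) ∧ A ⊆ ⋃ i, f i}

/-- The σ-ideal ℐ generated by narrow closed sets. -/
def IpG (H : ℕ → ℕ) (G : Set (Set Node × ℕ × ℕ)) : Set (Set (XSp H)) :=
  {A | ∃ f : ℕ → Set (XSp H), (∀ n, NarrowClosedG H G (f n)) ∧ A ⊆ ⋃ n, f n}

/-- A coordinate-wise permutation for `H`. -/
structure CWPerm (H : ℕ → ℕ) where
  f : ℕ → ℕ → ℕ
  bij : ∀ n, Set.BijOn (f n) (Set.Iio (H n)) (Set.Iio (H n))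
  id_out : ∀ n k, H n ≤ k → f n k = k

/-- The action of a coordinate-wise permutation on a node. -/
def CWPerm.apply {H : ℕ → ℕ} (π : CWPerm H) (η : Node) : Node :=
  η.mapIdx fun i k => π.f i k

/-- `π` is an `n`-coordinate-wise permutation. -/
def CWPerm.IsRat {H : ℕ → ℕ} (π : CWPerm H) (n : ℕ) : Prop :=
  ∀ m, n < m → ∀ k, π.f m k = k

/-- The action of a coordinate-wise permutation on the space 𝒳. -/
def CWPerm.act {H : ℕ → ℕ} (π : CWPerm H) (x : XSp H) : XSp H :=
  fun i => ⟨π.f i (x i).val, (π.bij i).mapsTo (x i).isLt⟩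

/-- A regular universality parameter (Definition 3.13). -/
def RegularParam {H : ℕ → ℕ} (p : UnivParam H) : Prop :=
  Suitable p ∧ ∀ π : CWPerm H, (∃ n, π.IsRat n) →
    ∀ S a b, (S, a, b) ∈ p.G → (π.apply '' S, a, b) ∈ p.G

/-- The additivity of an ideal (family of sets). -/
noncomputable def addIdeal {α : Type} (I : Set (Set α)) : Cardinal :=
  sInf {c | ∃ A : Set (Set α), A ⊆ I ∧ ⋃₀ A ∉ I ∧ Cardinal.mk A = c}

/-- The cofinality of an ideal (family of sets). -/
noncomputable def cofIdeal {α : Type} (I : Set (Set α)) : Cardinal :=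
  sInf {c | ∃ A : Set (Set α), A ⊆ I ∧ (∀ B ∈ I, ∃ C ∈ A, B ⊆ C) ∧ Cardinal.mk A = c}

/-- Eventual domination `f ≤* g`. -/
def evDomLE (f g : ℕ → ℕ) : Prop := ∀ᶠ n in atTop, f n ≤ g n

/-- The unbounding number 𝔟. -/
noncomputable def bNum : Cardinal :=
  sInf {c | ∃ F : Set (ℕ → ℕ), (∀ g, ∃ f ∈ F, ¬ evDomLE f g) ∧ Cardinal.mk F = c}

/-- The dominating number 𝔡. -/
noncomputable def dNum : Cardinal :=
  sInf {c | ∃ F : Set (ℕ → ℕ), (∀ g, ∃ f ∈ F, evDomLE g f) ∧ Cardinal.mk F = c}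

/-- The family 𝒢^{g,A}_𝐅 of Definition 2.8. -/
def GgA (H : ℕ → ℕ) (g : ℕ → ℕ) (A : Set ℕ) (FF : Set Node → NNReal) :
    Set (Set Node × ℕ × ℕ) :=
  {x | x = ((({([] : Node)}) : Set Node), 0, 0) ∨
    ∃ (S : Set Node) (a b N : ℕ), x = (S, a, b) ∧ IsFinTree H S N ∧ a ≤ b ∧ b ≤ N ∧
      (∀ ν ∈ levelSet S a, ∃ η : Node, IsHNode H η ∧ η.length = N ∧ ν <+: η ∧ η ∉ S) ∧
      ∃ Y : ℕ → Set Node,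
        (∀ i ∈ A ∩ Set.Ico a b, IsFinTree H (Y i) (i + 1) ∧ FF (Y i) ≤ (g i : NNReal)) ∧
        ∀ η ∈ levelSet S N, ∃ i ∈ A ∩ Set.Ico a b, η.take (i + 1) ∈ levelSet (Y i) (i + 1)}

/-- The family 𝒢^cmz_H of Definition 2.12. -/
def Gcmz (H : ℕ → ℕ) : Set (Set Node × ℕ × ℕ) :=
  {x | x = ((({([] : Node)}) : Set Node), 0, 0) ∨
    ∃ (S : Set Node) (a b N : ℕ), x = (S, a, b) ∧ IsFinTree H S N ∧ a ≤ b ∧ b ≤ N ∧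
      ((levelSet S b).ncard : ℝ) / (∏ i ∈ Finset.range b, (H i : ℝ)) ≤
        ∑ i ∈ Finset.Icc a b, 1 / ((i : ℝ) + 1) ^ 2}

/-- The level of a set of nodes (the supremum of the lengths of its elements). -/
noncomputable def treeLev (S : Set Node) : ℕ := sSup {n | ∃ η ∈ S, η.length = n}

/-- The function 𝐅₂ of Example 2.10(2). -/
noncomputable def F2fn (S : Set Node) : NNReal :=
  ((({k | ∃ η ∈ levelSet S (treeLev S), η.getLast? = some k}).ncard - 1 : ℕ) : NNReal)

/-- Immediate successors of a node in a tree. -/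
def succs (S : Set Node) (s : Node) : Set Node :=
  {ν ∈ S | s <+: ν ∧ ν.length = s.length + 1}

/-- The function 𝐅₀ of Example 2.10(1). -/
noncomputable def F0fn (S : Set Node) : NNReal :=
  ((sSup {m | ∃ s ∈ S, (∃ ν ∈ S, s <+: ν ∧ s ≠ ν) ∧ m = (succs S s).ncard - 1} : ℕ) : NNReal)

/-- The function 𝐅₁ of Example 2.10(1). -/
noncomputable def F1fn (S : Set Node) : NNReal :=
  (((levelSet S (treeLev S)).ncard - 1 : ℕ) : NNReal)

/-- The basic cylinder determined by a node. -/
def cyl (H : ℕ → ℕ) (η : Node) : Set (XSp H) := {x | branchNode H x η.length = η}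

/-- The mass of the cylinder of a node with respect to the product measure:
`1/∏_{i<lh(η)} H(i)`. -/
noncomputable def cylMass (H : ℕ → ℕ) (η : Node) : ℝ≥0∞ :=
  (∏ i ∈ Finset.range η.length, (H i : ℝ≥0∞))⁻¹

/-- `A` is null with respect to the product measure on 𝒳 (each factor carrying the
uniform probability measure): for every `ε > 0`, `A` can be covered by countably many
basic cylinders of total mass at most `ε`. -/
def ProdNull (H : ℕ → ℕ) (A : Set (XSp H)) : Prop :=
  ∀ ε : ℝ≥0∞, 0 < ε → ∃ C : ℕ → Node, A ⊆ (⋃ n, cyl H (C n)) ∧ ∑' n, cylMass H (C n) ≤ ε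

/-- A condition in the forcing notion Q^tree(𝔭). -/
def QCond (H : ℕ → ℕ) (p : UnivParam H) (q : ℕ × Set Node) : Prop :=
  IsInfTree H q.2 ∧ IsNarrow p q.2

/-- The order of the forcing notion Q^tree(𝔭). -/
def QLe (q r : ℕ × Set Node) : Prop :=
  q.1 ≤ r.1 ∧ q.2 ⊆ r.2 ∧ levelSet r.2 q.1 = levelSet q.2 q.1


/-- The subtree `T^{[ν]}` of nodes of `T` extending `ν`. -/
def aboveNode (T : Set Node) (ν : Node) : Set Node := {η ∈ T | ν <+: η}

/-- The set `Z(n̄, w̄)` of Proposition 4.6. -/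
def Zset (H : ℕ → ℕ) (A : Set ℕ) (nseq : ℕ → ℕ) (w : ℕ → Set ℕ) : Set (XSp H) :=
  {x | ∀ᶠ k in atTop, ∃ i ∈ A ∩ Set.Ico (nseq k) (nseq (k + 1)), ((x i : ℕ) ∈ w i)}

/- ============ Auxiliary development for Proposition 4.3 ============ -/

open Classical in
lemma getD_of_prefix {l₁ l₂ : Node} (h : l₁ <+: l₂) {i : ℕ} (hi : i < l₁.length) :
    l₂.getD i 0 = l₁.getD i 0 := by
  obtain ⟨t, rfl⟩ := h
  exact List.getD_append _ _ _ _ hi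

lemma take_eq_of_prefix {l₁ l₂ : Node} (h : l₁ <+: l₂) {n : ℕ} (hn : n ≤ l₁.length) :
    l₂.take n = l₁.take n := by
  obtain ⟨t, rfl⟩ := h
  exact List.take_append_of_le_length hn

lemma prefix_take_of_prefix {l₁ l₂ : Node} (h : l₁ <+: l₂) {n : ℕ} (hn : l₁.length ≤ n) :
    l₁ <+: l₂.take n := by
  obtain ⟨t, rfl⟩ := h
  rw [List.take_append, List.take_of_length_le hn]
  exact List.prefix_append _ _

lemma IsHNode.of_prefix {H : ℕ → ℕ} {l₁ l₂ : Node} (h2 : IsHNode H l₂) (h : l₁ <+: l₂) :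
    IsHNode H l₁ := by
  intro i hi
  rw [show l₁.getD i 0 = l₂.getD i 0 from (getD_of_prefix h hi).symm]
  exact h2 i (lt_of_lt_of_le hi h.length_le)

lemma IsHNode.take {H : ℕ → ℕ} {l : Node} (h : IsHNode H l) (n : ℕ) :
    IsHNode H (l.take n) := h.of_prefix (List.take_prefix _ _)

lemma isHNode_nil {H : ℕ → ℕ} : IsHNode H [] := by intro i hi; simp at hi

lemma isHNode_append_replicate {H : ℕ → ℕ} (hH : ∀ i, 0 < H i) {l : Node}
    (h : IsHNode H l) (m : ℕ) : IsHNode H (l ++ List.replicate m 0) := by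
  intro i hi
  by_cases hc : i < l.length
  · rw [List.getD_append _ _ _ _ hc]; exact h i hc
  · have : (l ++ List.replicate m 0).getD i 0 = 0 := by
      rw [List.getD_eq_getElem?_getD, List.getElem?_append, if_neg hc, List.getElem?_replicate]
      by_cases h2 : i - l.length < m <;> simp [h2]
    rw [this]; exact hH i

lemma isHNode_replicate {H : ℕ → ℕ} (hH : ∀ i, 0 < H i) (m : ℕ) :
    IsHNode H (List.replicate m 0) := by
  have := isHNode_append_replicate hH (isHNode_nil (H := H)) m
  simpa using this

/-- extension of a node by zeros to a prescribed length -/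
lemma exists_zero_ext {H : ℕ → ℕ} (hH : ∀ i, 0 < H i) {l : Node} (h : IsHNode H l)
    {L : ℕ} (hL : l.length ≤ L) :
    ∃ ν : Node, IsHNode H ν ∧ ν.length = L ∧ l <+: ν := by
  refine ⟨l ++ List.replicate (L - l.length) 0, isHNode_append_replicate hH h _, by
    simp [Nat.add_sub_cancel' hL], List.prefix_append _ _⟩

/- ===== branchNode lemmas ===== -/

lemma branchNode_length {H : ℕ → ℕ} (x : XSp H) (n : ℕ) :
    (branchNode H x n).length = n := by simp [branchNode]

lemma branchNode_getElem {H : ℕ → ℕ} (x : XSp H) (n i : ℕ) (h : i < (branchNode H x n).length) :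
    (branchNode H x n)[i] = (x i : ℕ) := by
  simp [branchNode]

lemma isHNode_branchNode {H : ℕ → ℕ} (x : XSp H) (n : ℕ) : IsHNode H (branchNode H x n) := by
  intro i hi
  rw [List.getD_eq_getElem _ _ hi, branchNode_getElem]
  exact (x i).isLt

lemma branchNode_take {H : ℕ → ℕ} (x : XSp H) {m n : ℕ} (h : m ≤ n) :
    (branchNode H x n).take m = branchNode H x m := by
  apply List.ext_getElem
  · simp [branchNode]; omega
  · intro i h1 h2
    rw [List.getElem_take, branchNode_getElem, branchNode_getElem]

lemma branchNode_prefix {H : ℕ → ℕ} (x : XSp H) {m n : ℕ} (h : m ≤ n) :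
    branchNode H x m <+: branchNode H x n := by
  rw [← branchNode_take x h]; exact List.take_prefix _ _

/- ===== tree lemmas ===== -/

def fullT (H : ℕ → ℕ) (n : ℕ) : Set Node := {η | IsHNode H η ∧ η.length ≤ n}

lemma isFinTree_fullT {H : ℕ → ℕ} (hH : ∀ i, 0 < H i) (n : ℕ) :
    IsFinTree H (fullT H n) n := by
  refine ⟨⟨⟨isHNode_nil, by simp⟩, ?_⟩, fun η h => ⟨h.1, h.2⟩, ?_⟩
  · rintro η ⟨h1, h2⟩ ν hν
    exact ⟨h1.of_prefix hν, le_trans hν.length_le h2⟩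
  · rintro η ⟨h1, h2⟩
    obtain ⟨ν, hν1, hν2, hν3⟩ := exists_zero_ext hH h1 h2
    exact ⟨ν, ⟨hν1, le_of_eq hν2⟩, hν3, hν2⟩

lemma infTree_ext_ge {H : ℕ → ℕ} {T : Set Node} (hT : IsInfTree H T) :
    ∀ k, ∀ η ∈ T, ∃ ν ∈ T, η <+: ν ∧ η.length + k ≤ ν.length := by
  intro k
  induction k with
  | zero => exact fun η h => ⟨η, h, List.prefix_refl _, le_refl _⟩
  | succ k ih =>
    intro η hη
    obtain ⟨ν, hν, h1, h2⟩ := ih η hη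
    obtain ⟨ν', hν', h3, h4⟩ := hT.2.2 ν hν
    have hlt : ν.length < ν'.length := by
      rcases lt_or_eq_of_le h3.length_le with h | h
      · exact h
      · exact absurd (h3.eq_of_length h) h4
    exact ⟨ν', hν', h1.trans h3, by omega⟩

lemma infTree_ext_exact {H : ℕ → ℕ} {T : Set Node} (hT : IsInfTree H T) {η : Node}
    (hη : η ∈ T) {L : ℕ} (hL : η.length ≤ L) : ∃ ν ∈ T, η <+: ν ∧ ν.length = L := by
  obtain ⟨ν, hν, h1, h2⟩ := infTree_ext_ge hT (L - η.length) η hη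
  refine ⟨ν.take L, hT.1.2 ν hν _ (List.take_prefix _ _), prefix_take_of_prefix h1 hL, ?_⟩
  rw [List.length_take]; omega

lemma isFinTree_below {H : ℕ → ℕ} {T : Set Node} (hT : IsInfTree H T) (n : ℕ) :
    IsFinTree H (below T n) n := by
  refine ⟨⟨⟨hT.1.1, by simp⟩, ?_⟩, fun η h => ⟨hT.2.1 η h.1, h.2⟩, ?_⟩
  · rintro η ⟨h1, h2⟩ ν hν
    exact ⟨hT.1.2 η h1 ν hν, le_trans hν.length_le h2⟩
  · rintro η ⟨h1, h2⟩
    obtain ⟨ν, hν, h3, h4⟩ := infTree_ext_exact hT h1 h2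
    exact ⟨ν, ⟨hν, le_of_eq h4⟩, h3, h4⟩

lemma finTree_ext_exact {H : ℕ → ℕ} {S : Set Node} {N : ℕ} (hS : IsFinTree H S N) {η : Node}
    (hη : η ∈ S) {L : ℕ} (hL : η.length ≤ L) (hLN : L ≤ N) :
    ∃ ν ∈ S, η <+: ν ∧ ν.length = L := by
  obtain ⟨ν, hν, h1, h2⟩ := hS.2.2 η hη
  refine ⟨ν.take L, hS.1.2 ν hν _ (List.take_prefix _ _), prefix_take_of_prefix h1 hL, ?_⟩
  rw [List.length_take]; omega
/- ===== zero-extension of a finite tree to a higher level ===== -/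

def zextT (S : Set Node) (N0 N : ℕ) : Set Node :=
  S ∪ {ν | ∃ η, η ∈ S ∧ η.length = N0 ∧ ∃ m, ν = η ++ List.replicate m 0 ∧ ν.length ≤ N}

lemma zextT_subset (S : Set Node) (N0 N : ℕ) : S ⊆ zextT S N0 N := fun _ h => Or.inl h

lemma zextT_levelSet {H : ℕ → ℕ} {S : Set Node} {N0 N : ℕ} (hS : IsFinTree H S N0) :
    levelSet (zextT S N0 N) N0 ⊆ S := by
  rintro ν ⟨hν, hlen⟩
  rcases hν with h | ⟨η, hη, hηl, m, rfl, _⟩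
  · exact h
  · have : m = 0 := by
      have := @List.length_append _ η (List.replicate m 0)
      rw [List.length_replicate] at this; omega
    subst this; simpa using hη

lemma zextT_finTree {H : ℕ → ℕ} (hH : ∀ i, 0 < H i) {S : Set Node} {N0 N : ℕ}
    (hS : IsFinTree H S N0) (hN : N0 ≤ N) : IsFinTree H (zextT S N0 N) N := by
  constructor
  · constructor
    · exact Or.inl hS.1.1
    · rintro η (hη | ⟨μ, hμ, hμl, m, rfl, hlen⟩) ν hν
      · exact Or.inl (hS.1.2 η hη ν hν)
      · by_cases hc : ν.length ≤ μ.length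
        · have : ν <+: μ := List.prefix_of_prefix_length_le hν (List.prefix_append _ _) hc
          exact Or.inl (hS.1.2 μ hμ ν this)
        · push_neg at hc
          have hlv : ν.length ≤ (μ ++ List.replicate m 0).length := hν.length_le
          rw [List.length_append, List.length_replicate] at hlv hlen
          obtain ⟨t, ht⟩ := hν
          have hform : ν = μ ++ List.replicate (ν.length - μ.length) 0 := by
            have h1 : ν = (μ ++ List.replicate m 0).take ν.length := by
              rw [← ht, List.take_append_of_le_length (le_refl _), List.take_length]
            conv_lhs => rw [h1]
            rw [List.take_append, List.take_of_length_le (le_of_lt hc),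
              List.take_replicate]
            congr 1
            rw [min_eq_left (by omega)]
          exact Or.inr ⟨μ, hμ, hμl, ν.length - μ.length, hform, by omega⟩
  constructor
  · rintro η (hη | ⟨μ, hμ, hμl, m, rfl, hlen⟩)
    · exact ⟨(hS.2.1 η hη).1, le_trans (hS.2.1 η hη).2 hN⟩
    · exact ⟨isHNode_append_replicate hH (hS.2.1 μ hμ).1 m, hlen⟩
  · rintro η (hη | ⟨μ, hμ, hμl, m, rfl, hlen⟩)
    · obtain ⟨ν, hν, h1, h2⟩ := hS.2.2 η hη
      refine ⟨ν ++ List.replicate (N - N0) 0, Or.inr ⟨ν, hν, h2, _, rfl, ?_⟩,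
        h1.trans (List.prefix_append _ _), ?_⟩ <;>
        simp [List.length_append, List.length_replicate, h2] <;> omega
    · refine ⟨μ ++ List.replicate (N - N0) 0, Or.inr ⟨μ, hμ, hμl, _, rfl, ?_⟩, ?_, ?_⟩
      · simp [List.length_append, List.length_replicate, hμl]; omega
      · have hm : m ≤ N - N0 := by
          rw [List.length_append, List.length_replicate] at hlen; omega
        rw [show (N - N0) = m + (N - N0 - m) by omega, List.replicate_add, ← List.append_assoc]
        exact List.prefix_append _ _
      · simp [List.length_append, List.length_replicate, hμl]; omega
/- ===== unions of finite trees ===== -/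

lemma isFinTree_union {H : ℕ → ℕ} {S1 S2 : Set Node} {N : ℕ}
    (h1 : IsFinTree H S1 N) (h2 : IsFinTree H S2 N) : IsFinTree H (S1 ∪ S2) N := by
  refine ⟨⟨Or.inl h1.1.1, ?_⟩, ?_, ?_⟩
  · rintro η (hη | hη) ν hν
    · exact Or.inl (h1.1.2 η hη ν hν)
    · exact Or.inr (h2.1.2 η hη ν hν)
  · rintro η (hη | hη)
    · exact h1.2.1 η hη
    · exact h2.2.1 η hη
  · rintro η (hη | hη)
    · obtain ⟨ν, hν, ha, hb⟩ := h1.2.2 η hη; exact ⟨ν, Or.inl hν, ha, hb⟩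
    · obtain ⟨ν, hν, ha, hb⟩ := h2.2.2 η hη; exact ⟨ν, Or.inr hν, ha, hb⟩

lemma isFinTree_biUnion_below {H : ℕ → ℕ} {T : ℕ → Set Node} {r N : ℕ}
    (hT : ∀ j, IsInfTree H (T j)) :
    IsFinTree H (⋃ j ∈ Set.Iic r, below (T j) N) N := by
  refine ⟨⟨?_, ?_⟩, ?_, ?_⟩
  · exact Set.mem_biUnion (Set.mem_Iic.2 (Nat.zero_le r)) ⟨(hT 0).1.1, by simp⟩
  · intro η hη ν hν
    obtain ⟨j, hj, hmem⟩ := Set.mem_iUnion₂.1 hη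
    exact Set.mem_biUnion hj (((isFinTree_below (hT j) N).1.2) η hmem ν hν)
  · intro η hη
    obtain ⟨j, hj, hmem⟩ := Set.mem_iUnion₂.1 hη
    exact (isFinTree_below (hT j) N).2.1 η hmem
  · intro η hη
    obtain ⟨j, hj, hmem⟩ := Set.mem_iUnion₂.1 hη
    obtain ⟨ν, hν, ha, hb⟩ := (isFinTree_below (hT j) N).2.2 η hmem
    exact ⟨ν, Set.mem_biUnion hj hν, ha, hb⟩

lemma isFinTree_singleton_nil {H : ℕ → ℕ} : IsFinTree H {([] : Node)} 0 := by
  refine ⟨⟨rfl, ?_⟩, ?_, ?_⟩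
  · rintro η rfl ν hν
    have := hν.length_le
    simp only [List.length_nil, Nat.le_zero, List.length_eq_zero_iff] at this
    simp [this]
  · rintro η rfl; exact ⟨isHNode_nil, by simp⟩
  · rintro η rfl; exact ⟨[], rfl, List.prefix_refl _, rfl⟩

/- ===== Lemma U: amalgamating finitely many narrow trees into one G-tree ===== -/

lemma lemU {H : ℕ → ℕ} (hH : ∀ i, 0 < H i) (p : UnivParam H) {T : ℕ → Set Node}
    (hT : ∀ j, IsInfTree H (T j) ∧ IsNarrowG p.G (T j)) :
    ∀ r m : ℕ, ∃ S a b NS, (S, a, b) ∈ p.G ∧ IsFinTree H S NS ∧ m ≤ a ∧ a ≤ b ∧ b ≤ NS ∧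
      ∀ j ≤ r, below (T j) NS ⊆ S := by
  intro r
  induction r with
  | zero =>
    intro m
    obtain ⟨a, ham, b, hab, hG⟩ := (hT 0).2 m
    refine ⟨below (T 0) (b+1), a, b, b+1, hG, isFinTree_below (hT 0).1 _, ham, hab.le,
      by omega, ?_⟩
    intro j hj
    rw [Nat.le_zero.1 hj]
  | succ r ih =>
    intro m
    obtain ⟨S₀, a₀, b₀, N₀, hG₀, hfin₀, hma₀, hab₀, hbN₀, hsub₀⟩ := ih (max m 1)
    obtain ⟨a₁, ha₁, b₁, hab₁, hG₁⟩ := (hT (r+1)).2 (b₀ + 1)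
    set N' : ℕ := max (max N₀ (b₁+1)) (p.F b₁ + 1) with hN'
    have hN₀N : N₀ ≤ N' := le_trans (le_max_left _ _) (le_max_left _ _)
    have hb₁N : b₁ + 1 ≤ N' := le_trans (le_max_right _ _) (le_max_left _ _)
    have hFN : p.F b₁ < N' := lt_of_lt_of_le (Nat.lt_succ_self _) (le_max_right _ _)
    set U : Set Node := ⋃ j ∈ Set.Iic r, below (T j) N' with hU
    set S1 : Set Node := zextT S₀ N₀ N' ∪ U with hS1
    have hTj : ∀ j, IsInfTree H (T j) := fun j => (hT j).1
    have hS1fin : IsFinTree H S1 N' :=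
      isFinTree_union (zextT_finTree hH hfin₀ hN₀N) (isFinTree_biUnion_below hTj)
    have hS1lev : levelSet S1 N₀ ⊆ S₀ := by
      rintro ν ⟨hν, hlen⟩
      rcases hν with hν | hν
      · exact zextT_levelSet hfin₀ ⟨hν, hlen⟩
      · obtain ⟨j, hj, hmem⟩ := Set.mem_iUnion₂.1 hν
        exact hsub₀ j hj ⟨hmem.1, le_of_eq hlen⟩
    have hS1G : (S1, a₀, b₀) ∈ p.G :=
      p.G_mono S₀ a₀ b₀ N₀ S1 N' hG₀ hfin₀ hS1fin hN₀N hS1lev a₀ b₀ le_rfl le_rfl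
        (le_trans hbN₀ hN₀N)
    set S2 : Set Node := below (T (r+1)) N' with hS2
    have hS2fin : IsFinTree H S2 N' := isFinTree_below (hT (r+1)).1 _
    have hS2G : (S2, a₁, b₁) ∈ p.G := by
      refine p.G_mono _ a₁ b₁ (b₁+1) S2 N' hG₁ (isFinTree_below (hT (r+1)).1 _) hS2fin hb₁N
        ?_ a₁ b₁ le_rfl le_rfl (by omega)
      rintro ν ⟨hν, hlen⟩
      exact ⟨hν.1, le_of_eq hlen⟩
    have hlev0 : ∀ W : Set Node, levelSet W 0 ⊆ ({([] : Node)} : Set Node) := by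
      rintro W ν ⟨_, hlen⟩
      simpa using List.length_eq_zero_iff.1 hlen
    obtain ⟨S', hS'G, hS'fin, hS'sub, _⟩ :=
      p.G_amalg S1 a₀ b₀ S2 a₁ b₁ N' {([] : Node)} 0 hS1G hS2G hS1fin hS2fin
        isFinTree_singleton_nil (by omega) (hlev0 S1) (hlev0 S2) (by omega) (by omega) hFN
    have hbF : b₁ ≤ p.F b₁ := p.F_incr.le_apply
    refine ⟨S', a₀, p.F b₁, N', hS'G, hS'fin, le_trans (le_max_left _ _) hma₀, by omega,
      by omega, ?_⟩
    intro j hj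
    rcases Nat.lt_succ_iff_lt_or_eq.1 (Nat.lt_succ_of_le hj) with h | h
    · intro ν hν
      exact hS'sub (Or.inl (Or.inr (Set.mem_biUnion (Set.mem_Iic.2 (by omega)) hν)))
    · subst h
      exact fun ν hν => hS'sub (Or.inr hν)

/- ===== the escape obligation ===== -/

def escObl (H : ℕ → ℕ) (T : ℕ → Set Node) (L r : ℕ) : Prop :=
  ∃ k, L < k ∧ ∀ η, IsHNode H η → η.length = L →
    ∃ ν, IsHNode H ν ∧ ν.length = k ∧ η <+: ν ∧ ∀ j ≤ r, ν ∉ T j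

lemma escObl_of {H : ℕ → ℕ} (hH : ∀ i, 0 < H i) (p : UnivParam H) (hp : Suitable p)
    {T : ℕ → Set Node} (hT : ∀ j, IsInfTree H (T j) ∧ IsNarrowG p.G (T j)) (L r : ℕ) :
    escObl H T L r := by
  obtain ⟨N, hNL, hesc⟩ := hp.1 L
  obtain ⟨S, a, b, NS, hG, hfin, hma, hab, hbN, hsub⟩ := lemU hH p hT r (max N (L+1))
  refine ⟨NS, by omega, ?_⟩
  intro η hη hlen
  obtain ⟨ν, hν1, hν2, hν3, hν4⟩ := hesc S a b NS hG hfin (by omega) η hη hlen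
  refine ⟨ν, hν1, hν2, hν3, ?_⟩
  intro j hj hmem
  exact hν4 (hsub j hj ⟨hmem, le_of_eq hν2⟩)
/- ===== prefix of take ===== -/
lemma take_prefix_take {l₁ l₂ : Node} (h : l₁ <+: l₂) (m : ℕ) : l₁.take m <+: l₂.take m := by
  obtain ⟨t, rfl⟩ := h
  rw [List.take_append]
  exact List.prefix_append _ _

/- ===== the main lemma ===== -/

lemma mainLem {H : ℕ → ℕ} (hH : ∀ n, 2 ≤ H n) (p : UnivParam H) (hp : RegularParam p) :
    ∃ φs : Set (XSp H) → (ℕ → ℕ),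
      ∀ Bas : Set (Set (XSp H)), Bas ⊆ IpG H p.G →
        (∀ C ∈ IpG H p.G, ∃ D ∈ Bas, C ⊆ D) →
        ∀ g : ℕ → ℕ, ∃ B ∈ Bas, evDomLE g (φs B) := by
  classical
  have hH0 : ∀ i, 0 < H i := fun i => lt_of_lt_of_le two_pos (hH i)
  -- a global sequence of trees in G which are full up to level n
  have hseq : ∀ n : ℕ, ∃ (S' : Set Node) (a b M : ℕ), (S', a, b) ∈ p.G ∧ n < a ∧ a ≤ b ∧
      b ≤ M ∧ fullT H n ⊆ S' ∧ IsFinTree H S' M := by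
    intro n
    obtain ⟨N, hN, hmain⟩ := hp.1.2 n
    have hη : IsHNode H (List.replicate N 0) := isHNode_replicate hH0 N
    have htake : (List.replicate N 0).take n ∈ fullT H n := by
      rw [List.take_replicate]
      exact ⟨isHNode_replicate hH0 _, by simp⟩
    obtain ⟨S', a, b, hG, hna, hab, hbN, hsub, _, _⟩ :=
      hmain (fullT H n) (isFinTree_fullT hH0 n) (List.replicate N 0) hη
        (List.length_replicate) htake
    obtain ⟨M, hfin, _, hbM⟩ := p.G_tree S' a b hG
    exact ⟨S', a, b, M, hG, hna, hab, hbM, hsub, hfin⟩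
  choose Sg ag bg Mg hmem hlt hab hbM hfull hfin using hseq
  -- monotonized levels
  set Mg' : ℕ → ℕ := fun n => Nat.rec (Mg 0) (fun k prev => max (Mg (k+1)) (prev+1)) n
    with hMg'def
  have hMg'succ : ∀ n, Mg' (n+1) = max (Mg (n+1)) (Mg' n + 1) := fun n => rfl
  have hMgle : ∀ n, Mg n ≤ Mg' n := by
    intro n
    cases n with
    | zero => exact le_rfl
    | succ n => rw [hMg'succ]; exact le_max_left _ _
  have hMg'mono : StrictMono Mg' :=
    strictMono_nat_of_lt_succ (fun n => by rw [hMg'succ]; omega)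
  set Sg' : ℕ → Set Node := fun n => zextT (Sg n) (Mg n) (Mg' n) with hSg'def
  have hfin' : ∀ n, IsFinTree H (Sg' n) (Mg' n) := fun n => zextT_finTree hH0 (hfin n) (hMgle n)
  have hmem' : ∀ n, (Sg' n, ag n, bg n) ∈ p.G := fun n =>
    p.G_mono (Sg n) (ag n) (bg n) (Mg n) (Sg' n) (Mg' n) (hmem n) (hfin n) (hfin' n)
      (hMgle n) (zextT_levelSet (hfin n)) (ag n) (bg n) le_rfl le_rfl
      (le_trans (hbM n) (hMgle n))
  have hfull' : ∀ n, fullT H n ⊆ Sg' n := fun n => (hfull n).trans (zextT_subset _ _ _)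
  have hMgt : ∀ n, n < Mg' n := fun n =>
    lt_of_lt_of_le (lt_of_lt_of_le (hlt n) (le_trans (hab n) (hbM n))) (hMgle n)
  -- choice of covers
  have hcov : ∀ D : Set (XSp H), D ∈ IpG H p.G → ∃ T : ℕ → Set Node,
      (∀ m, IsInfTree H (T m) ∧ IsNarrowG p.G (T m)) ∧ D ⊆ ⋃ m, branches H (T m) := by
    intro D h
    obtain ⟨f, hf, hsub⟩ := h
    choose T h1 h2 h3 using hf
    refine ⟨T, fun m => ⟨h1 m, h2 m⟩, ?_⟩
    intro x hx
    obtain ⟨n, hn⟩ := Set.mem_iUnion.1 (hsub hx)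
    exact Set.mem_iUnion.2 ⟨n, (h3 n) ▸ hn⟩
  choose covT hcovT using hcov
  have hesc : ∀ (D : Set (XSp H)) (h : D ∈ IpG H p.G) (L r : ℕ), escObl H (covT D h) L r :=
    fun D h L r => escObl_of hH0 p hp.1 (hcovT D h).1 L r
  -- the function φ*
  have hphi : ∀ (D : Set (XSp H)) (h : D ∈ IpG H p.G), ∃ φ : ℕ → ℕ, ∀ i,
      Mg' (φ i) < φ (i+1) ∧ ∀ η, IsHNode H η → η.length = Mg' (φ i) →
        ∃ ν, IsHNode H ν ∧ ν.length = φ (i+1) ∧ η <+: ν ∧ ∀ j ≤ i+1, ν ∉ covT D h j := by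
    intro D h
    refine ⟨fun i => Nat.rec 0
      (fun j prev => Classical.choose (hesc D h (Mg' prev) (j+1))) i, fun i => ?_⟩
    exact Classical.choose_spec (hesc D h
      (Mg' (Nat.rec 0 (fun j prev => Classical.choose (hesc D h (Mg' prev) (j+1))) i)) (i+1))
  choose phiF hphiS using hphi
  refine ⟨fun D => if h : D ∈ IpG H p.G then phiF D h else fun _ => 0, ?_⟩
  intro Bas hBas hbasis g
  -- monotone majorant of g
  set mg : ℕ → ℕ := fun i => (Finset.range (i+1)).sup g + i with hmgdef
  have hgmono : Monotone mg := by
    intro i j hij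
    exact add_le_add (Finset.sup_mono (Finset.range_subset_range.2 (by omega))) hij
  have hgg : ∀ i, g i ≤ mg i := fun i =>
    le_trans (Finset.le_sup (Finset.self_mem_range_succ i)) (Nat.le_add_right _ _)
  -- the boundary sequence
  set ns : ℕ → ℕ := fun κ => Nat.rec 0 (fun k prev => max (mg (2*(k+1))) (Mg' prev + 1)) κ
    with hnsdef
  have hns0 : ns 0 = 0 := rfl
  have hnssucc : ∀ κ, ns (κ+1) = max (mg (2*(κ+1))) (Mg' (ns κ) + 1) := fun κ => rfl
  have hnsgap : ∀ κ, Mg' (ns κ) < ns (κ+1) := fun κ => by rw [hnssucc]; omega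
  have hnsmono : StrictMono ns :=
    strictMono_nat_of_lt_succ (fun κ => lt_trans (hMgt _) (hnsgap κ))
  have hnsk : ∀ κ, κ ≤ ns κ := fun κ => hnsmono.le_apply
  have hnsg : ∀ κ, 1 ≤ κ → mg (2*κ) ≤ ns κ := by
    intro κ hκ
    obtain ⟨k, rfl⟩ : ∃ k, κ = k+1 := ⟨κ-1, by omega⟩
    rw [hnssucc]; exact le_max_left _ _
  -- the tree T_g
  set Tg : Set Node := {η | IsHNode H η ∧ ∀ κ, η.take (Mg' (ns κ)) ∈ Sg' (ns κ)} with hTgdef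
  have htake_all : ∀ (l : Node) (m : ℕ), l.length ≤ m → l.take m = l :=
    fun l m h => List.take_of_length_le h
  have hTg_pre : ∀ η ∈ Tg, ∀ ν : Node, ν <+: η → ν ∈ Tg := by
    rintro η ⟨h1, h2⟩ ν hν
    exact ⟨h1.of_prefix hν, fun κ => (hfin' (ns κ)).1.2 _ (h2 κ) _ (take_prefix_take hν _)⟩
  have hTg_nil : ([] : Node) ∈ Tg :=
    ⟨isHNode_nil, fun κ => by simpa using (hfin' (ns κ)).1.1⟩
  have hTg_full : ∀ (κ : ℕ) (ν : Node), IsHNode H ν → ν.length ≤ ns κ → ν ∈ Sg' (ns κ) :=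
    fun κ ν h1 h2 => hfull' (ns κ) ⟨h1, h2⟩
  have hTg_mem_of : ∀ (κ : ℕ) (ν : Node), IsHNode H ν → ν.length = Mg' (ns κ) →
      ν ∈ Sg' (ns κ) → (∀ κ' < κ, ν.take (Mg' (ns κ')) ∈ Sg' (ns κ')) → ν ∈ Tg := by
    intro κ ν hν hlen hmemν hlow
    refine ⟨hν, fun κ' => ?_⟩
    rcases lt_trichotomy κ' κ with h | rfl | h
    · exact hlow κ' h
    · rw [htake_all ν _ (le_of_eq hlen)]; exact hmemν
    · have h2 : ns (κ+1) ≤ ns κ' := hnsmono.monotone h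
      have h3 : ns κ' ≤ Mg' (ns κ') := le_of_lt (hMgt _)
      have h1 := hnsgap κ
      rw [htake_all ν _ (by omega)]
      exact hTg_full κ' ν hν (by omega)
  have hext : ∀ κ, ∀ η, η ∈ Tg → η.length ≤ Mg' (ns κ) →
      ∃ ν, ν ∈ Tg ∧ η <+: ν ∧ ν.length = Mg' (ns κ) := by
    intro κ
    induction κ with
    | zero =>
      intro η hη hlen
      have hηS : η ∈ Sg' (ns 0) := by rw [← htake_all η _ hlen]; exact hη.2 0
      obtain ⟨ν, hν, hpre, hvlen⟩ := finTree_ext_exact (hfin' (ns 0)) hηS hlen le_rfl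
      have hνH := ((hfin' (ns 0)).2.1 ν hν).1
      exact ⟨ν, hTg_mem_of 0 ν hνH hvlen hν (fun κ' h => absurd h (Nat.not_lt_zero _)),
        hpre, hvlen⟩
    | succ κ ih =>
      intro η hη hlen
      by_cases hc : η.length ≤ Mg' (ns κ)
      · obtain ⟨ν', hν'Tg, hpre', hlen'⟩ := ih η hη hc
        have hMM : Mg' (ns κ) ≤ Mg' (ns (κ+1)) :=
          hMg'mono.monotone (hnsmono.monotone (Nat.le_succ κ))
        have hν'S : ν' ∈ Sg' (ns (κ+1)) := by
          rw [← htake_all ν' _ (le_trans (le_of_eq hlen') hMM)]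
          exact hν'Tg.2 (κ+1)
        obtain ⟨ν, hν, hpre, hvlen⟩ := finTree_ext_exact (hfin' (ns (κ+1))) hν'S
          (le_trans (le_of_eq hlen') hMM) le_rfl
        have hνH := ((hfin' (ns (κ+1))).2.1 ν hν).1
        refine ⟨ν, hTg_mem_of (κ+1) ν hνH hvlen hν ?_, hpre'.trans hpre, hvlen⟩
        intro κ' hκ'
        have h1 : Mg' (ns κ') ≤ ν'.length := by
          rw [hlen']; exact hMg'mono.monotone (hnsmono.monotone (by omega))
        rw [take_eq_of_prefix hpre h1]
        exact hν'Tg.2 κ'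
      · push_neg at hc
        have hηS : η ∈ Sg' (ns (κ+1)) := by rw [← htake_all η _ hlen]; exact hη.2 (κ+1)
        obtain ⟨ν, hν, hpre, hvlen⟩ := finTree_ext_exact (hfin' (ns (κ+1))) hηS hlen le_rfl
        have hνH := ((hfin' (ns (κ+1))).2.1 ν hν).1
        refine ⟨ν, hTg_mem_of (κ+1) ν hνH hvlen hν ?_, hpre, hvlen⟩
        intro κ' hκ'
        have h1 : Mg' (ns κ') ≤ Mg' (ns κ) := hMg'mono.monotone (hnsmono.monotone (by omega))
        rw [take_eq_of_prefix hpre (by omega)]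
        exact hη.2 κ'
  have hext_any : ∀ η, η ∈ Tg → ∀ L, η.length ≤ L →
      ∃ ν, ν ∈ Tg ∧ η <+: ν ∧ ν.length = L := by
    intro η hη L hL
    have hL2 : η.length ≤ Mg' (ns L) := le_trans hL (le_trans (hnsk L) (le_of_lt (hMgt _)))
    obtain ⟨ν, hν, hpre, hvlen⟩ := hext L η hη hL2
    have hLν : L ≤ ν.length := by
      rw [hvlen]; exact le_trans (hnsk L) (le_of_lt (hMgt _))
    refine ⟨ν.take L, hTg_pre ν hν _ (List.take_prefix _ _), prefix_take_of_prefix hpre hL, ?_⟩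
    rw [List.length_take]; omega
  have hTg_inf : IsInfTree H Tg := by
    refine ⟨⟨hTg_nil, hTg_pre⟩, fun η h => h.1, ?_⟩
    intro η hη
    obtain ⟨ν, hν, hpre, hvlen⟩ := hext_any η hη (η.length+1) (Nat.le_succ _)
    have hne : η.length ≠ ν.length := by omega
    exact ⟨ν, hν, hpre, fun heq => hne (by rw [heq])⟩
  have hTg_nar : IsNarrowG p.G Tg := by
    intro m
    have e1 := hab (ns m); have e2 := hbM (ns m); have e3 := hMgle (ns m)
    refine ⟨ag (ns m), le_trans (hnsk m) (le_of_lt (hlt (ns m))), Mg' (ns m) + 1,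
      by omega, ?_⟩
    refine p.G_mono (Sg' (ns m)) (ag (ns m)) (bg (ns m)) (Mg' (ns m)) _ (Mg' (ns m) + 1 + 1)
      (hmem' (ns m)) (hfin' (ns m)) (isFinTree_below hTg_inf _) (by omega) ?_ _ _ le_rfl
      (by omega) (by omega)
    rintro ν ⟨⟨hνTg, _⟩, hlen⟩
    rw [← htake_all ν _ (le_of_eq hlen)]
    exact hνTg.2 m
  have hzone : ∀ (κ : ℕ) (ν' ρ : Node), ν' ∈ Tg → ν'.length = Mg' (ns κ) → ν' <+: ρ →
      IsHNode H ρ → ρ.length ≤ ns (κ+1) → ρ ∈ Tg := by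
    intro κ ν' ρ hν' hlen hpre hρH hρlen
    refine ⟨hρH, fun κ' => ?_⟩
    rcases Nat.lt_or_ge κ' (κ+1) with h | h
    · have h1 : Mg' (ns κ') ≤ ν'.length := by
        rw [hlen]; exact hMg'mono.monotone (hnsmono.monotone (by omega))
      rw [take_eq_of_prefix hpre h1]
      exact hν'.2 κ'
    · have h2 : ρ.length ≤ ns κ' := le_trans hρlen (hnsmono.monotone h)
      rw [htake_all ρ _ (le_trans h2 (le_of_lt (hMgt _)))]
      exact hTg_full κ' ρ hρH h2
  -- find a basis element above [T_g]
  have hCIp : branches H Tg ∈ IpG H p.G :=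
    ⟨fun _ => branches H Tg, fun _ => ⟨Tg, hTg_inf, hTg_nar, rfl⟩,
      fun x hx => Set.mem_iUnion.2 ⟨0, hx⟩⟩
  obtain ⟨B, hBBas, hCB⟩ := hbasis (branches H Tg) hCIp
  have hBIp : B ∈ IpG H p.G := hBas hBBas
  refine ⟨B, hBBas, ?_⟩
  show evDomLE g (if h : B ∈ IpG H p.G then phiF B h else fun _ => 0)
  rw [dif_pos hBIp]
  have hφS := hphiS B hBIp
  set φ := phiF B hBIp with hφdef
  set T := covT B hBIp with hTdef
  have hφlt : ∀ i, φ i < φ (i+1) := fun i => lt_of_le_of_lt (le_of_lt (hMgt (φ i))) (hφS i).1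
  have hφmono : StrictMono φ := strictMono_nat_of_lt_succ hφlt
  set d : ℕ → ℕ := fun i => Nat.findGreatest (fun κ => ns κ ≤ φ i) (φ i) with hddef
  have hd1 : ∀ i, ns (d i) ≤ φ i := by
    intro i
    have h0 : (fun κ => ns κ ≤ φ i) 0 := by
      simp only [hns0]; exact Nat.zero_le _
    exact Nat.findGreatest_spec (P := fun κ => ns κ ≤ φ i) (Nat.zero_le _) h0
  have hd2 : ∀ i κ, d i < κ → φ i < ns κ := by
    intro i κ h
    rcases Nat.lt_or_ge (φ i) κ with hc | hc
    · exact lt_of_lt_of_le hc (hnsk κ)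
    · by_contra hcon
      push_neg at hcon
      exact Nat.findGreatest_is_greatest h hc hcon
  have hdmono : Monotone d := by
    apply monotone_nat_of_le_succ
    intro i
    by_contra hcon
    push_neg at hcon
    have u1 := hd2 (i+1) (d i) hcon
    have u2 := hd1 i
    have u3 := hφlt i
    omega
  have hdub : ∀ b, ∃ i, b ≤ d i := by
    intro b
    refine ⟨ns b, ?_⟩
    by_contra hcon
    push_neg at hcon
    have u1 := hd2 (ns b) b hcon
    have u2 : ns b ≤ φ (ns b) := hφmono.le_apply
    omega
  by_cases hinf : ∀ N, ∃ i, N ≤ i ∧ φ (i+1) ≤ ns (d i + 1)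
  · exfalso
    have hstep : ∀ (t : ℕ) (η : Node), η ∈ Tg → ∃ ρ, ρ ∈ Tg ∧ η <+: ρ ∧
        η.length < ρ.length ∧ ∀ j ≤ t, ρ ∉ T j := by
      intro t η hη
      obtain ⟨i₀, hi₀⟩ := hdub η.length
      obtain ⟨i, hi1, hfit⟩ := hinf (max t i₀)
      have hdi : η.length ≤ d i := le_trans hi₀ (hdmono (le_trans (le_max_right t i₀) hi1))
      have hlenle : η.length ≤ Mg' (ns (d i)) :=
        le_trans hdi (le_trans (hnsk _) (le_of_lt (hMgt _)))
      obtain ⟨ν', hν'Tg, hpre', hlen'⟩ := hext (d i) η hη hlenle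
      have hMle : Mg' (ns (d i)) ≤ Mg' (φ i) := hMg'mono.monotone (hd1 i)
      obtain ⟨μ, hμH, hμlen, hμpre⟩ := exists_zero_ext hH0 hν'Tg.1
        (show ν'.length ≤ Mg' (φ i) by omega)
      obtain ⟨ρ, hρH, hρlen, hρpre, hρesc⟩ := (hφS i).2 μ hμH hμlen
      have hρTg : ρ ∈ Tg := hzone (d i) ν' ρ hν'Tg hlen' (hμpre.trans hρpre) hρH
        (by rw [hρlen]; exact hfit)
      refine ⟨ρ, hρTg, hpre'.trans (hμpre.trans hρpre), ?_, ?_⟩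
      · have u1 := (hφS i).1
        omega
      · intro j hj
        have u2 : t ≤ i := le_trans (le_max_left t i₀) hi1
        exact hρesc j (by omega)
    have hchainex : ∃ ρc : ℕ → Node, (∀ t, ρc t ∈ Tg) ∧ ∀ t, ρc t <+: ρc (t+1) ∧
        (ρc t).length < (ρc (t+1)).length ∧ ∀ j ≤ t, ρc (t+1) ∉ T j := by
      let F : ℕ → {l : Node // l ∈ Tg} := fun t => Nat.rec (⟨[], hTg_nil⟩)
        (fun t prev => ⟨Classical.choose (hstep t prev.1 prev.2),
          (Classical.choose_spec (hstep t prev.1 prev.2)).1⟩) t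
      refine ⟨fun t => (F t).1, fun t => (F t).2, fun t => ?_⟩
      have h := Classical.choose_spec (hstep t (F t).1 (F t).2)
      exact ⟨h.2.1, h.2.2.1, h.2.2.2⟩
    obtain ⟨ρc, hρTgm, hρstep⟩ := hchainex
    have hρlen : ∀ t, t ≤ (ρc t).length := by
      intro t
      induction t with
      | zero => exact Nat.zero_le _
      | succ t ih => have := (hρstep t).2.1; omega
    have hρchain : ∀ s t, s ≤ t → ρc s <+: ρc t := by
      intro s t h
      induction t, h using Nat.le_induction with
      | base => exact List.prefix_refl _
      | succ t ht ih => exact ih.trans (hρstep t).1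
    have hxval : ∀ i, (ρc (i+1)).getD i 0 < H i := by
      intro i
      have h1 : i < (ρc (i+1)).length := lt_of_lt_of_le (Nat.lt_succ_self i) (hρlen (i+1))
      exact (hρTgm (i+1)).1 i h1
    set x : XSp H := fun i => ⟨(ρc (i+1)).getD i 0, hxval i⟩ with hxdef
    have hbx : ∀ n, branchNode H x n = (ρc n).take n := by
      intro n
      apply List.ext_getElem
      · rw [branchNode_length, List.length_take]
        exact (min_eq_left (hρlen n)).symm
      · intro i h1 h2
        rw [branchNode_getElem, List.getElem_take]
        have hin : i + 1 ≤ n := by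
          rw [branchNode_length] at h1; omega
        have hi1 : i < (ρc (i+1)).length := lt_of_lt_of_le (Nat.lt_succ_self i) (hρlen (i+1))
        have hin' : i < (ρc n).length := by
          have := hρlen n
          rw [branchNode_length] at h1
          omega
        have hxi : (x i : ℕ) = (ρc (i+1)).getD i 0 := by rw [hxdef]
        rw [hxi, ← List.getD_eq_getElem (ρc n) 0 hin']
        exact (getD_of_prefix (hρchain (i+1) n hin) hi1).symm
    have hxTg : x ∈ branches H Tg := by
      intro n
      rw [hbx n]
      exact hTg_pre _ (hρTgm n) _ (List.take_prefix _ _)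
    obtain ⟨m, hm⟩ := Set.mem_iUnion.1 ((hcovT B hBIp).2 (hCB hxTg))
    have hbad : ρc (m+1) ∈ T m := by
      have h1 := hm ((ρc (m+1)).length)
      rw [hbx] at h1
      have h2 : ρc (m+1) <+: ρc ((ρc (m+1)).length) := hρchain _ _ (hρlen (m+1))
      rw [← List.prefix_iff_eq_take.1 h2] at h1
      exact h1
    exact (hρstep m).2.2 m le_rfl hbad
  · push_neg at hinf
    obtain ⟨N, hN⟩ := hinf
    have hstep' : ∀ i, N ≤ i → d i + 1 ≤ d (i+1) := by
      intro i hi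
      by_contra hcon
      push_neg at hcon
      have u1 := hd2 (i+1) (d i + 1) hcon
      have u2 := hN i hi
      omega
    have hgrow : ∀ k, k ≤ d (N + k) := by
      intro k
      induction k with
      | zero => exact Nat.zero_le _
      | succ k ih =>
        have h1 := hstep' (N + k) (by omega)
        exact le_trans (Nat.succ_le_succ ih) h1
    show ∀ᶠ n in Filter.atTop, g n ≤ φ n
    refine Filter.eventually_atTop.2 ⟨2*N + 2, ?_⟩
    intro i hi
    have h1 : i - N ≤ d i := by
      have h := hgrow (i - N)
      rwa [show N + (i - N) = i from by omega] at h
    have h2 : 1 ≤ d i := by omega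
    have h3 : mg (2 * d i) ≤ ns (d i) := hnsg (d i) h2
    have h4 : mg i ≤ mg (2 * d i) := hgmono (by omega)
    have h5 := hd1 i
    have h6 := hgg i
    omega

/-- Proposition 4.3 (second part): `𝔡 ≤ cof(ℐ_𝔭)`; more precisely there is a map
`φ*` on sets such that for every basis `ℬ` of `ℐ_𝔭`, the family `{φ*(B) : B ∈ ℬ}` is
dominating. -/
theorem d_le_cof_Ip (H : ℕ → ℕ) (hH : ∀ n, 2 ≤ H n) (p : UnivParam H)
    (hp : RegularParam p) :
    dNum ≤ cofIdeal (IpG H p.G) ∧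
    ∃ φs : Set (XSp H) → (ℕ → ℕ),
      ∀ Bas : Set (Set (XSp H)), Bas ⊆ IpG H p.G →
        (∀ C ∈ IpG H p.G, ∃ D ∈ Bas, C ⊆ D) →
        ∀ g : ℕ → ℕ, ∃ B ∈ Bas, evDomLE g (φs B) := by
  obtain ⟨φs, hφs⟩ := mainLem hH p hp
  constructor
  · apply le_csInf
    · exact ⟨Cardinal.mk ↥(IpG H p.G), IpG H p.G, subset_rfl,
        fun B hB => ⟨B, hB, subset_rfl⟩, rfl⟩
    · rintro c ⟨A, hAsub, hAcof, rfl⟩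
      have hdom : ∀ g : ℕ → ℕ, ∃ f ∈ φs '' A, evDomLE g f := by
        intro g
        obtain ⟨B, hB, hd⟩ := hφs A hAsub hAcof g
        exact ⟨φs B, Set.mem_image_of_mem _ hB, hd⟩
      have h1 : dNum ≤ Cardinal.mk ↥(φs '' A) :=
        csInf_le (OrderBot.bddBelow _) ⟨φs '' A, hdom, rfl⟩
      exact le_trans h1 Cardinal.mk_image_le
  · exact ⟨φs, hφs⟩

end UnivForcing
end

section
/- Let g(n)+1 < H(n) for all n, A ⊆ ω infinite, and suppose n̄⁰, w̄⁰, n̄¹, w̄¹ satisfy: n̄ˡ = ⟨nˡ_k : k<ω⟩ is strictly increasing with A ∩ [nˡ_k, nˡ_{k+1}) ≠ ∅ for each k, and w̄ˡ = ⟨wˡ_i : i ∈ A⟩ with wˡ_i ⊆ H(i), |wˡ_i| = g(i)+1. Define Z(n̄, w̄) = {η ∈ ∏_{i<ω} H(i) : for all but finitely many k, there is i ∈ A ∩ [n_k, n_{k+1}) with η(i) ∈ w_i}. If Z(n̄⁰, w̄⁰) ⊆ Z(n̄¹, w̄¹), then for infinitely many k we have w⁰_i = w¹_i for all i ∈ A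 ∩ [n⁰_k, n⁰_{k+1}). -/
open Set Filter MeasureTheory NNReal ENNReal

namespace UnivForcing

/-- Claim 4.7: if `Z(n̄⁰, w̄⁰) ⊆ Z(n̄¹, w̄¹)`, then for infinitely many `k`,
`w⁰_i = w¹_i` for all `i ∈ A ∩ [n⁰_k, n⁰_{k+1})`. -/
theorem Zset_subset_infinitely_equal (H : ℕ → ℕ) (hH : ∀ n, 2 ≤ H n)
    (g : ℕ → ℕ) (hg : ∀ n, g n + 1 < H n) (A : Set ℕ) (hA : A.Infinite)
    (n0 n1 : ℕ → ℕ) (w0 w1 : ℕ → Set ℕ)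
    (hs0 : StrictMono n0) (hs1 : StrictMono n1)
    (hne0 : ∀ k, (A ∩ Set.Ico (n0 k) (n0 (k + 1))).Nonempty)
    (hne1 : ∀ k, (A ∩ Set.Ico (n1 k) (n1 (k + 1))).Nonempty)
    (hw0 : ∀ i ∈ A, w0 i ⊆ Set.Iio (H i) ∧ (w0 i).ncard = g i + 1)
    (hw1 : ∀ i ∈ A, w1 i ⊆ Set.Iio (H i) ∧ (w1 i).ncard = g i + 1)
    (hsub : Zset H A n0 w0 ⊆ Zset H A n1 w1) :
    ∀ m, ∃ k, m ≤ k ∧ ∀ i ∈ A ∩ Set.Ico (n0 k) (n0 (k + 1)), w0 i = w1 i := by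
  by_contra h
  push_neg at h
  obtain ⟨m, hm⟩ := h
  have hfin1 : ∀ i ∈ A, (w1 i).Finite := fun i hi =>
    (Set.finite_Iio (H i)).subset (hw1 i hi).1
  have hval : ∀ i, ∃ v : ℕ, v < H i ∧ (i ∈ A → v ∉ w1 i) ∧
      (i ∈ A → w0 i ≠ w1 i → v ∈ w0 i) := by
    intro i
    by_cases hiA : i ∈ A
    · by_cases hne : w0 i = w1 i
      · have hns : ¬ Set.Iio (H i) ⊆ w1 i := by
          intro hsub'
          have h1 : (Set.Iio (H i)).ncard ≤ (w1 i).ncard :=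
            Set.ncard_le_ncard hsub' (hfin1 i hiA)
          have h2 : (Set.Iio (H i)).ncard = H i := by
            rw [← Finset.coe_range, Set.ncard_coe_finset, Finset.card_range]
          rw [(hw1 i hiA).2, h2] at h1
          have := hg i
          omega
        obtain ⟨v, hv1, hv2⟩ := Set.not_subset.mp hns
        exact ⟨v, hv1, fun _ => hv2, fun _ h' => (h' hne).elim⟩
      · have hdiff : (w0 i \ w1 i).Nonempty := by
          rw [Set.diff_nonempty]
          intro hsub'
          exact hne (Set.eq_of_subset_of_ncard_le hsub'
            (by rw [(hw0 i hiA).2, (hw1 i hiA).2]) (hfin1 i hiA))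
        obtain ⟨v, hv0, hv1⟩ := hdiff
        exact ⟨v, (hw0 i hiA).1 hv0, fun _ => hv1, fun _ _ => hv0⟩
    · exact ⟨0, by have := hH i; omega, fun h' => absurd h' hiA,
        fun h' => absurd h' hiA⟩
  choose v hvlt hvnot hvin using hval
  set η : XSp H := fun i => ⟨v i, hvlt i⟩ with hη
  have hη0 : η ∈ Zset H A n0 w0 := by
    rw [Zset, Set.mem_setOf_eq]
    filter_upwards [eventually_ge_atTop m] with k hk
    obtain ⟨i, hiA, hne⟩ := hm k hk
    exact ⟨i, hiA, hvin i hiA.1 hne⟩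
  have hη1 := hsub hη0
  rw [Zset, Set.mem_setOf_eq] at hη1
  obtain ⟨k, i, hiA, hmem⟩ := hη1.exists
  exact hvnot i hiA.1 hmem

end UnivForcing
end

section
/- Let g(n)+1 < H(n) for all n and A ⊆ ω infinite, and let 𝔭 = (𝒢^{g,A}_{𝐅₂}, F_H). Suppose f : ω → ω∖{0,1}, κ < add(ℐ_𝔭), and {f_α : α < κ} ⊆ ∏_{i<ω} f(i). Then there is f* ∈ ∏_{i<ω} f(i) such that for every α < κ, f*(i) = f_α(i) for infinitely many i. -/
open Set Filter MeasureTheory NNReal ENNReal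

namespace UnivForcing

-- ### Auxiliary development for Claim 4.8

namespace C48

variable (H g : ℕ → ℕ) (A : Set ℕ) (f : ℕ → ℕ)

/-- generic extension of a node by values of `fn` up to length `L`. -/
def fillExt (ρ : Node) (L : ℕ) (fn : ℕ → ℕ) : Node :=
  ρ ++ List.ofFn (fun r : Fin (L - ρ.length) => fn (ρ.length + (r : ℕ)))

lemma fillExt_length {ρ : Node} {L : ℕ} (fn : ℕ → ℕ) (h : ρ.length ≤ L) :
    (fillExt ρ L fn).length = L := by
  simp [fillExt]; omega

lemma fillExt_prefix (ρ : Node) (L : ℕ) (fn : ℕ → ℕ) : ρ <+: fillExt ρ L fn :=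
  List.prefix_append _ _

lemma getD_of_prefix {ν η : Node} (h : ν <+: η) {j : ℕ} (hj : j < ν.length) :
    η.getD j 0 = ν.getD j 0 := by
  obtain ⟨r, rfl⟩ := h
  exact List.getD_append _ _ _ _ hj

lemma fillExt_getD_lo {ρ : Node} {L : ℕ} (fn : ℕ → ℕ) {j : ℕ} (hj : j < ρ.length) :
    (fillExt ρ L fn).getD j 0 = ρ.getD j 0 :=
  List.getD_append _ _ _ _ hj

lemma fillExt_getD_hi {ρ : Node} {L : ℕ} (fn : ℕ → ℕ) {j : ℕ} (h1 : ρ.length ≤ j)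
    (h2 : j < L) : (fillExt ρ L fn).getD j 0 = fn j := by
  rw [fillExt, List.getD_append_right _ _ _ _ h1]
  have hlt : j - ρ.length <
      (List.ofFn (fun r : Fin (L - ρ.length) => fn (ρ.length + (r : ℕ)))).length := by
    simp; omega
  rw [List.getD_eq_getElem _ _ hlt, List.getElem_ofFn]
  have : ρ.length + (j - ρ.length) = j := by omega
  simp only []
  rw [this]

lemma take_getD {l : Node} {n j : ℕ} (hj : j < n) (hn : n ≤ l.length) :
    (l.take n).getD j 0 = l.getD j 0 := by
  have h1 : j < (l.take n).length := by rw [List.length_take]; omega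
  have h2 : j < l.length := by omega
  rw [List.getD_eq_getElem _ _ h1, List.getD_eq_getElem _ _ h2, List.getElem_take]

lemma take_prefix_take {l : Node} {m n : ℕ} (h : m ≤ n) : l.take m <+: l.take n := by
  have he : l.take m = (l.take n).take m := by
    rw [List.take_take, Nat.min_eq_left h]
  rw [he]
  exact List.take_prefix _ _

lemma snoc_getD_lo {ρ : Node} {y : ℕ} {j : ℕ} (hj : j < ρ.length) :
    (ρ ++ [y]).getD j 0 = ρ.getD j 0 := List.getD_append _ _ _ _ hj

lemma snoc_getD_last {ρ : Node} {y : ℕ} : (ρ ++ [y]).getD ρ.length 0 = y := by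
  rw [List.getD_append_right _ _ _ _ (le_refl _)]
  simp

lemma bn_length (x : XSp H) (n : ℕ) : (branchNode H x n).length = n := by
  simp [branchNode]

lemma bn_getD (x : XSp H) {n j : ℕ} (hj : j < n) :
    (branchNode H x n).getD j 0 = (x j : ℕ) := by
  have h : j < (branchNode H x n).length := by rw [bn_length]; exact hj
  rw [List.getD_eq_getElem _ _ h]
  simp [branchNode]

lemma lastD {τ : Node} {n : ℕ} (h : τ.length = n + 1) :
    τ.getLast? = some (τ.getD n 0) := by
  have hn : n < τ.length := by omega
  rw [List.getLast?_eq_getElem?, h]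
  simp only [Nat.add_sub_cancel]
  rw [List.getElem?_eq_getElem hn, List.getD_eq_getElem _ _ hn]

-- ### enumeration of A, blocks

noncomputable def aE : ℕ → ℕ := Nat.nth (· ∈ A)

def tI : ℕ → ℕ
  | 0 => 0
  | i + 1 => tI i + f i

noncomputable def co (i s : ℕ) : ℕ := aE A (tI f i + s)

noncomputable def BL (i : ℕ) : ℕ := co A f i (f i - 1) + 1

def pat (v s : ℕ) : ℕ := if s = v then 1 else 0

def PN (η : Node) (i v : ℕ) : Prop := ∀ s, s < f i → η.getD (co A f i s) 0 = pat v s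

def PB (x : XSp H) (i v : ℕ) : Prop := ∀ s, s < f i → (x (co A f i s) : ℕ) = pat v s

def Alph (η : Node) : Prop := ∀ j, j < η.length → j ∈ A → η.getD j 0 ≤ g j + 1

def Feas (m : ℕ) (w : ℕ → ℕ) (η : Node) : Prop :=
  IsHNode H η ∧ Alph g A η ∧ ∀ i, m ≤ i → BL A f i ≤ η.length → ¬ PN A f η i (w i)

def TT (m : ℕ) (w : ℕ → ℕ) : Set Node := {η | Feas H g A f m w η}

def Bset : Set (XSp H) := {x | ∀ j, j ∈ A → (x j : ℕ) ≤ g j + 1}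

lemma aE_mem (hA : A.Infinite) (n : ℕ) : aE A n ∈ A :=
  Nat.nth_mem_of_infinite (by simpa [Set.setOf_mem_eq] using hA) n

lemma aE_smono (hA : A.Infinite) : StrictMono (aE A) :=
  Nat.nth_strictMono (by simpa [Set.setOf_mem_eq] using hA)

lemma le_aE (hA : A.Infinite) (n : ℕ) : n ≤ aE A n := (aE_smono A hA).le_apply

lemma tI_mono (hf : ∀ i, 2 ≤ f i) : ∀ {i i' : ℕ}, i ≤ i' → tI f i ≤ tI f i' := by
  intro i i' h
  induction i' with
  | zero =>
    have : i = 0 := by omega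
    subst this; exact le_refl _
  | succ i' ih =>
    rcases Nat.lt_or_ge i (i' + 1) with hc | hc
    · have h1 := ih (by omega)
      have h2 : tI f (i' + 1) = tI f i' + f i' := rfl
      omega
    · have : i = i' + 1 := by omega
      subst this; exact le_refl _

lemma self_le_tI (hf : ∀ i, 2 ≤ f i) (i : ℕ) : i ≤ tI f i := by
  induction i with
  | zero => exact Nat.zero_le _
  | succ i ih =>
    have h2 := hf i
    show i + 1 ≤ tI f i + f i
    omega

lemma co_mono (hA : A.Infinite) {i s s' : ℕ} (h : s ≤ s') : co A f i s ≤ co A f i s' :=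
  (aE_smono A hA).monotone (by omega)

lemma co_inj (hA : A.Infinite) {i s s' : ℕ} (h : co A f i s = co A f i s') : s = s' := by
  have := (aE_smono A hA).injective h
  omega

lemma co_lt_BL (hA : A.Infinite) {i s : ℕ} (hs : s < f i) : co A f i s < BL A f i := by
  have h := co_mono A f hA (i := i) (s := s) (s' := f i - 1) (by omega)
  unfold BL
  omega

lemma BL_smono (hA : A.Infinite) (hf : ∀ i, 2 ≤ f i) : StrictMono (BL A f) := by
  intro i i' h
  have h2 : tI f i + f i ≤ tI f i' := by
    have : tI f (i + 1) ≤ tI f i' := tI_mono f hf h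
    simpa [tI] using this
  have hlt : tI f i + (f i - 1) < tI f i' + (f i' - 1) := by
    have := hf i; have := hf i'; omega
  have := aE_smono A hA hlt
  unfold BL co
  omega

lemma BL_pos (i : ℕ) : 0 < BL A f i := by unfold BL; omega

lemma pat_le_one (v s : ℕ) : pat v s ≤ 1 := by unfold pat; split <;> omega

lemma pat_self (v : ℕ) : pat v v = 1 := if_pos rfl

lemma pat_of_ne {v s : ℕ} (h : s ≠ v) : pat v s = 0 := if_neg h

lemma PB_unique {x : XSp H} {i v v' : ℕ} (h : PB H A f x i v) (h' : PB H A f x i v')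
    (hv : v < f i) (hv' : v' < f i) : v = v' := by
  by_contra hne
  have e1 := h v' hv'
  have e2 := h' v' hv'
  rw [pat_self] at e2
  rw [pat_of_ne (fun hh => hne hh.symm)] at e1
  omega

-- ### the trees T_{m,w}

lemma feas_nil (hf : ∀ i, 2 ≤ f i) (m : ℕ) (w : ℕ → ℕ) : Feas H g A f m w [] := by
  refine ⟨?_, ?_, ?_⟩
  · intro i hi; simp at hi
  · intro j hj; simp at hj
  · intro i _ hBL
    have := BL_pos A f i
    simp only [List.length_nil] at hBL
    omega

lemma feas_prefix (hA : A.Infinite) {m : ℕ} {w : ℕ → ℕ} {ν η : Node}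
    (hη : Feas H g A f m w η) (hpre : ν <+: η) : Feas H g A f m w ν := by
  obtain ⟨h1, h2, h3⟩ := hη
  have hlen := hpre.length_le
  refine ⟨?_, ?_, ?_⟩
  · intro j hj
    rw [← getD_of_prefix hpre hj]
    exact h1 j (lt_of_lt_of_le hj hlen)
  · intro j hj hjA
    rw [← getD_of_prefix hpre hj]
    exact h2 j (lt_of_lt_of_le hj hlen) hjA
  · intro i him hBL hPN
    refine h3 i him (le_trans hBL hlen) ?_
    intro s hs
    rw [getD_of_prefix hpre (lt_of_lt_of_le (co_lt_BL A f hA hs) hBL)]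
    exact hPN s hs

lemma feas_snoc (hA : A.Infinite) (hf : ∀ i, 2 ≤ f i) (hH : ∀ n, 2 ≤ H n)
    {m : ℕ} {w : ℕ → ℕ} {ρ : Node} (hρ : Feas H g A f m w ρ) :
    ∃ y, y ≤ 1 ∧ Feas H g A f m w (ρ ++ [y]) := by
  classical
  have hgen : ∀ y, y ≤ 1 →
      (∀ i, m ≤ i → BL A f i = ρ.length + 1 → ¬ PN A f (ρ ++ [y]) i (w i)) →
      Feas H g A f m w (ρ ++ [y]) := by
    intro y hy hnew
    obtain ⟨h1, h2, h3⟩ := hρ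
    have hlen : (ρ ++ [y]).length = ρ.length + 1 := by simp
    refine ⟨?_, ?_, ?_⟩
    · intro j hj
      rw [hlen] at hj
      rcases Nat.lt_or_ge j ρ.length with hc | hc
      · rw [snoc_getD_lo hc]; exact h1 j hc
      · have hj' : j = ρ.length := by omega
        subst hj'
        rw [snoc_getD_last]
        have := hH ρ.length; omega
    · intro j hj hjA
      rw [hlen] at hj
      rcases Nat.lt_or_ge j ρ.length with hc | hc
      · rw [snoc_getD_lo hc]; exact h2 j hc hjA
      · have hj' : j = ρ.length := by omega
        subst hj'
        rw [snoc_getD_last]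
        omega
    · intro i him hBL
      rw [hlen] at hBL
      rcases Nat.lt_or_ge (BL A f i) (ρ.length + 1) with hc | hc
      · intro hPN
        refine h3 i him (by omega) ?_
        intro s hs
        rw [← snoc_getD_lo (lt_of_lt_of_le (co_lt_BL A f hA hs) (by omega))]
        exact hPN s hs
      · exact hnew i him (by omega)
  by_cases hb : ∃ i, m ≤ i ∧ BL A f i = ρ.length + 1 ∧ PN A f (ρ ++ [0]) i (w i)
  · refine ⟨1, le_refl 1, hgen 1 (le_refl 1) ?_⟩
    intro i him hBLi hPN
    obtain ⟨i₀, him₀, hBL₀, hPN₀⟩ := hb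
    have hi : i₀ = i := (BL_smono A f hA hf).injective (hBL₀.trans hBLi.symm)
    subst hi
    have hs : f i₀ - 1 < f i₀ := by have := hf i₀; omega
    have hco : co A f i₀ (f i₀ - 1) = ρ.length := by
      have hBL' : BL A f i₀ = co A f i₀ (f i₀ - 1) + 1 := rfl
      omega
    have e0 := hPN₀ _ hs
    have e1 := hPN _ hs
    rw [hco, snoc_getD_last] at e0 e1
    omega
  · refine ⟨0, by omega, hgen 0 (by omega) ?_⟩
    intro i him hBLi hPN
    exact hb ⟨i, him, hBLi, hPN⟩

lemma feas_extend (hA : A.Infinite) (hf : ∀ i, 2 ≤ f i) (hH : ∀ n, 2 ≤ H n)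
    {m : ℕ} {w : ℕ → ℕ} {η : Node} (hη : Feas H g A f m w η) :
    ∀ L, η.length ≤ L → ∃ ν, Feas H g A f m w ν ∧ η <+: ν ∧ ν.length = L := by
  intro L
  induction L with
  | zero =>
    intro h
    exact ⟨η, hη, List.prefix_refl _, by omega⟩
  | succ L ih =>
    intro h
    rcases Nat.lt_or_ge L η.length with hc | hc
    · exact ⟨η, hη, List.prefix_refl _, by omega⟩
    · obtain ⟨ν, hν, hpre, hlen⟩ := ih hc
      obtain ⟨y, _, hfeas⟩ := feas_snoc H g A f hA hf hH hν
      refine ⟨ν ++ [y], hfeas, hpre.trans (List.prefix_append _ _), by simp [hlen]⟩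

lemma TT_tree (hA : A.Infinite) (hf : ∀ i, 2 ≤ f i) (m : ℕ) (w : ℕ → ℕ) :
    IsTreeSet (TT H g A f m w) :=
  ⟨feas_nil H g A f hf m w, fun _ hη ν hpre => feas_prefix H g A f hA hη hpre⟩

lemma TT_inf (hA : A.Infinite) (hf : ∀ i, 2 ≤ f i) (hH : ∀ n, 2 ≤ H n)
    (m : ℕ) (w : ℕ → ℕ) : IsInfTree H (TT H g A f m w) := by
  refine ⟨TT_tree H g A f hA hf m w, fun η hη => hη.1, fun η hη => ?_⟩
  obtain ⟨ν, hν, hpre, hlen⟩ := feas_extend H g A f hA hf hH hη (η.length + 1) (by omega)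
  refine ⟨ν, hν, hpre, ?_⟩
  intro hcon
  rw [← hcon] at hlen
  omega

lemma below_fin (hA : A.Infinite) (hf : ∀ i, 2 ≤ f i) (hH : ∀ n, 2 ≤ H n)
    (m : ℕ) (w : ℕ → ℕ) (n : ℕ) : IsFinTree H (below (TT H g A f m w) n) n := by
  refine ⟨⟨⟨feas_nil H g A f hf m w, by simp⟩, ?_⟩, ?_, ?_⟩
  · rintro η ⟨hη, hle⟩ ν hpre
    exact ⟨feas_prefix H g A f hA hη hpre, le_trans hpre.length_le hle⟩
  · rintro η ⟨hη, hle⟩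
    exact ⟨hη.1, hle⟩
  · rintro η ⟨hη, hle⟩
    obtain ⟨ν, hν, hpre, hlen⟩ := feas_extend H g A f hA hf hH hη n hle
    exact ⟨ν, ⟨hν, le_of_eq hlen⟩, hpre, hlen⟩

-- ### treeLev / F2fn helpers

lemma treeLev_eq (S : Set Node) (N : ℕ) (hub : ∀ η ∈ S, η.length ≤ N)
    (hex : ∃ η ∈ S, η.length = N) : treeLev S = N := by
  apply IsGreatest.csSup_eq
  constructor
  · obtain ⟨η, hη, hl⟩ := hex
    exact ⟨η, hη, hl⟩
  · rintro n ⟨η, hη, rfl⟩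
    exact hub η hη

lemma F2_le_card (S : Set Node) (c : ℕ)
    (h : ({k | ∃ η ∈ levelSet S (treeLev S), η.getLast? = some k}).ncard ≤ c + 1) :
    F2fn S ≤ (c : NNReal) := by
  have h2 : ({k | ∃ η ∈ levelSet S (treeLev S), η.getLast? = some k}).ncard - 1 ≤ c := by
    omega
  exact_mod_cast Nat.cast_le.mpr h2

lemma ncard_Iic_diff (c v : ℕ) (hv : v ≤ c) : (Set.Iic c \ {v}).ncard = c := by
  have hmem : v ∈ Set.Iic c := hv
  have hfin : (Set.Iic c).Finite := Set.finite_Iic c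
  rw [Set.ncard_diff_singleton_of_mem hmem]
  rw [← Finset.coe_Iic, Set.ncard_coe_finset, Nat.card_Iic]
  omega

-- ### the trees Dumb and Ys

def Dumb (j : ℕ) : Set Node := {ν | ∃ k ≤ j + 1, ν = List.replicate k 0}

lemma dumb_fin (hH : ∀ n, 2 ≤ H n) (j : ℕ) : IsFinTree H (Dumb j) (j + 1) := by
  refine ⟨⟨⟨0, by omega, rfl⟩, ?_⟩, ?_, ?_⟩
  · rintro η ⟨k, hk, rfl⟩ ν hpre
    refine ⟨ν.length, ?_, ?_⟩
    · have := hpre.length_le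
      rw [List.length_replicate] at this
      omega
    · exact List.eq_replicate_of_mem
        (fun b hb => List.eq_of_mem_replicate (hpre.subset hb))
  · rintro η ⟨k, hk, rfl⟩
    constructor
    · intro i hi
      rw [List.length_replicate] at hi
      rw [List.getD_eq_getElem _ _ (by rw [List.length_replicate]; exact hi)]
      rw [List.getElem_replicate]
      have := hH i; omega
    · rw [List.length_replicate]; exact hk
  · rintro η ⟨k, hk, rfl⟩
    refine ⟨List.replicate (j + 1) 0, ⟨j + 1, le_refl _, rfl⟩, ?_, by rw [List.length_replicate]⟩
    refine ⟨List.replicate (j + 1 - k) 0, ?_⟩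
    rw [← List.replicate_add]
    congr 1
    omega

lemma dumb_treeLev (j : ℕ) : treeLev (Dumb j) = j + 1 := by
  apply treeLev_eq
  · rintro η ⟨k, hk, rfl⟩
    rw [List.length_replicate]; exact hk
  · exact ⟨List.replicate (j + 1) 0, ⟨j + 1, le_refl _, rfl⟩, List.length_replicate⟩

lemma dumb_F2 (c j : ℕ) : F2fn (Dumb j) ≤ (c : NNReal) := by
  apply F2_le_card
  have hsub : {k | ∃ η ∈ levelSet (Dumb j) (treeLev (Dumb j)), η.getLast? = some k} ⊆ {0} := by
    rintro k ⟨η, ⟨⟨k', hk', rfl⟩, hlen⟩, hlast⟩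
    rw [dumb_treeLev] at hlen
    rw [List.length_replicate] at hlen
    subst hlen
    rw [lastD List.length_replicate] at hlast
    rw [List.getD_eq_getElem _ _ (by rw [List.length_replicate]; omega)] at hlast
    rw [List.getElem_replicate] at hlast
    have : k = 0 := (Option.some.inj hlast).symm
    simp [this]
  have := Set.ncard_le_ncard hsub (Set.finite_singleton 0)
  rw [Set.ncard_singleton] at this
  omega

def Ys (V i0 s j : ℕ) : Set Node :=
  {ν | IsHNode H ν ∧ ν.length ≤ j + 1 ∧
    (∀ s', s' < s → co A f i0 s' < ν.length → ν.getD (co A f i0 s') 0 = pat V s') ∧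
    (ν.length = j + 1 → ν.getD j 0 ≠ pat V s ∧ ν.getD j 0 ≤ g j + 1)}

lemma Ys_fin (hA : A.Infinite) (hH : ∀ n, 2 ≤ H n) (V i0 s j : ℕ)
    (hj : co A f i0 s = j) : IsFinTree H (Ys H g A f V i0 s j) (j + 1) := by
  classical
  have hext : ∀ η ∈ Ys H g A f V i0 s j,
      ∃ ν ∈ Ys H g A f V i0 s j, η <+: ν ∧ ν.length = j + 1 := by
    intro η hη
    obtain ⟨h1, h2, h3, h4⟩ := hη
    set eY : ℕ → ℕ := fun k =>
      if k = j then 1 - pat V s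
      else if h : ∃ s', s' < s ∧ co A f i0 s' = k then pat V h.choose else 0 with heY
    have heY_le : ∀ k, eY k ≤ 1 := by
      intro k
      rw [heY]
      dsimp only
      split
      · omega
      · split
        · exact pat_le_one _ _
        · omega
    set ν := fillExt η (j + 1) eY with hν
    have hνlen : ν.length = j + 1 := fillExt_length _ h2
    refine ⟨ν, ⟨?_, ?_, ?_, ?_⟩, fillExt_prefix _ _ _, hνlen⟩
    · intro k hk
      rw [hνlen] at hk
      rcases Nat.lt_or_ge k η.length with hc | hc
      · rw [fillExt_getD_lo _ hc]; exact h1 k hc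
      · rw [fillExt_getD_hi _ hc hk]
        have := heY_le k; have := hH k; omega
    · exact le_of_eq hνlen
    · intro s' hs' hco
      rw [hνlen] at hco
      rcases Nat.lt_or_ge (co A f i0 s') η.length with hc | hc
      · rw [fillExt_getD_lo _ hc]
        exact h3 s' hs' hc
      · rw [fillExt_getD_hi _ hc hco, heY]
        dsimp only
        have hne : co A f i0 s' ≠ j := by
          rw [← hj]
          intro hcon
          have := co_inj A f hA hcon
          omega
        rw [if_neg hne]
        have hex' : ∃ t, t < s ∧ co A f i0 t = co A f i0 s' := ⟨s', hs', rfl⟩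
        rw [dif_pos hex']
        have : hex'.choose = s' := co_inj A f hA hex'.choose_spec.2
        rw [this]
    · intro _
      rcases Nat.lt_or_ge j η.length with hc | hc
      · have hη_top : η.length = j + 1 := by omega
        rw [← getD_of_prefix (fillExt_prefix _ _ _) (by omega : j < η.length)] at *
        exact h4 hη_top
      · rw [fillExt_getD_hi _ hc (by omega), heY]
        dsimp only
        rw [if_pos rfl]
        have := pat_le_one V s
        constructor
        · omega
        · omega
  refine ⟨⟨?_, ?_⟩, ?_, hext⟩
  · refine ⟨?_, ?_, ?_, ?_⟩
    · intro i hi; simp at hi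
    · simp
    · intro s' _ hco; simp at hco
    · intro h; simp at h
  · rintro η ⟨h1, h2, h3, h4⟩ ν hpre
    have hlen := hpre.length_le
    refine ⟨?_, by omega, ?_, ?_⟩
    · intro k hk
      rw [← getD_of_prefix hpre hk]
      exact h1 k (by omega)
    · intro s' hs' hco
      rw [← getD_of_prefix hpre hco]
      exact h3 s' hs' (by omega)
    · intro hνlen
      have : ν = η := hpre.eq_of_length (by omega)
      subst this
      exact h4 hνlen
  · rintro η ⟨h1, h2, _, _⟩
    exact ⟨h1, h2⟩

lemma Ys_F2 (hA : A.Infinite) (hH : ∀ n, 2 ≤ H n) (V i0 s j : ℕ)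
    (hj : co A f i0 s = j) : F2fn (Ys H g A f V i0 s j) ≤ (g j : NNReal) := by
  have hfin := Ys_fin H g A f hA hH V i0 s j hj
  have hlev : treeLev (Ys H g A f V i0 s j) = j + 1 := by
    apply treeLev_eq
    · intro η hη; exact hη.2.1
    · obtain ⟨ν, hν, _, hl⟩ := hfin.2.2 [] (by
        refine ⟨?_, ?_, ?_, ?_⟩
        · intro i hi; simp at hi
        · simp
        · intro s' _ hco; simp at hco
        · intro h; simp at h)
      exact ⟨ν, hν, hl⟩
  apply F2_le_card
  rw [hlev]
  have hsub : {k | ∃ η ∈ levelSet (Ys H g A f V i0 s j) (j + 1), η.getLast? = some k} ⊆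
      Set.Iic (g j + 1) \ {pat V s} := by
    rintro k ⟨η, ⟨hη, hlen⟩, hlast⟩
    rw [lastD hlen] at hlast
    have hk : η.getD j 0 = k := Option.some.inj hlast
    obtain ⟨hne, hle⟩ := hη.2.2.2 hlen
    rw [hk] at hne hle
    exact ⟨hle, by simpa using hne⟩
  have hfin2 : (Set.Iic (g j + 1) \ {pat V s}).Finite := (Set.finite_Iic _).diff
  have := Set.ncard_le_ncard hsub hfin2
  rw [ncard_Iic_diff _ _ (le_trans (pat_le_one V s) (by omega))] at this
  omega

-- ### narrowness of TT

lemma TT_narrow (hA : A.Infinite) (hf : ∀ i, 2 ≤ f i) (hH : ∀ n, 2 ≤ H n)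
    (m : ℕ) (w : ℕ → ℕ) : IsNarrowG (GgA H g A F2fn) (TT H g A f m w) := by
  classical
  intro m'
  set i0 := m + m' with hi0
  have him : m ≤ i0 := Nat.le_add_right m m'
  set a := co A f i0 0 with ha
  set b := BL A f i0 with hb
  have hm'a : m' ≤ a := by
    have h1 : m' ≤ i0 := Nat.le_add_left m' m
    have h2 : i0 ≤ tI f i0 := self_le_tI f hf i0
    have h3 : tI f i0 + 0 ≤ aE A (tI f i0 + 0) := le_aE A hA _
    have h4 : a = aE A (tI f i0 + 0) := rfl
    omega
  have hfpos : 0 < f i0 := by have := hf i0; omega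
  have hab : a < b := co_lt_BL A f hA hfpos
  have hco_ge : ∀ s, a ≤ co A f i0 s := fun s => co_mono A f hA (Nat.zero_le s)
  have hco_lt : ∀ s, s < f i0 → co A f i0 s < b := fun s hs => co_lt_BL A f hA hs
  refine ⟨a, hm'a, b, hab, ?_⟩
  refine Or.inr ⟨below (TT H g A f m w) (b + 1), a, b, b + 1, rfl,
    below_fin H g A f hA hf hH m w (b + 1), le_of_lt hab, by omega, ?_, ?_⟩
  · -- escape clause
    rintro ν ⟨⟨hνT, _⟩, hνlen⟩
    set eF : ℕ → ℕ := fun k =>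
      if h : ∃ s, s < f i0 ∧ co A f i0 s = k then pat (w i0) h.choose else 0 with heF
    have heF_le : ∀ k, eF k ≤ 1 := by
      intro k
      rw [heF]
      dsimp only
      split
      · exact pat_le_one _ _
      · omega
    set η := fillExt ν (b + 1) eF with hη
    have hlenν : ν.length ≤ b + 1 := by omega
    have hηlen : η.length = b + 1 := fillExt_length _ hlenν
    have hgetpat : ∀ s, s < f i0 → η.getD (co A f i0 s) 0 = pat (w i0) s := by
      intro s hs
      have h1 : ν.length ≤ co A f i0 s := by
        rw [hνlen]; exact hco_ge s
      have h2 : co A f i0 s < b + 1 := by have := hco_lt s hs; omega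
      rw [fillExt_getD_hi _ h1 h2, heF]
      dsimp only
      have hex' : ∃ t, t < f i0 ∧ co A f i0 t = co A f i0 s := ⟨s, hs, rfl⟩
      rw [dif_pos hex']
      have : hex'.choose = s := co_inj A f hA hex'.choose_spec.2
      rw [this]
    refine ⟨η, ?_, hηlen, fillExt_prefix _ _ _, ?_⟩
    · intro k hk
      rw [hηlen] at hk
      rcases Nat.lt_or_ge k ν.length with hc | hc
      · rw [fillExt_getD_lo _ hc]; exact hνT.1 k hc
      · rw [fillExt_getD_hi _ hc hk]
        have := heF_le k; have := hH k; omega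
    · rintro ⟨hηT, _⟩
      refine hηT.2.2 i0 him ?_ hgetpat
      rw [hηlen, hb]
      omega
  · -- the trees Y
    refine ⟨fun j => if h : ∃ s, s < f i0 ∧ co A f i0 s = j
      then Ys H g A f (w i0) i0 h.choose j else Dumb j, ?_, ?_⟩
    · intro i hi
      beta_reduce
      by_cases h : ∃ s, s < f i0 ∧ co A f i0 s = i
      · rw [dif_pos h]
        exact ⟨Ys_fin H g A f hA hH _ _ _ _ h.choose_spec.2,
          Ys_F2 H g A f hA hH _ _ _ _ h.choose_spec.2⟩
      · rw [dif_neg h]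
        exact ⟨dumb_fin H hH i, dumb_F2 (g i) i⟩
    · rintro η ⟨⟨hηT, _⟩, hηlen⟩
      have hnot : ¬ PN A f η i0 (w i0) := by
        refine hηT.2.2 i0 him ?_
        rw [hηlen, hb]
        omega
      have hex : ∃ s, s < f i0 ∧ η.getD (co A f i0 s) 0 ≠ pat (w i0) s := by
        by_contra hcon
        push_neg at hcon
        exact hnot (fun s hs => hcon s hs)
      set s0 := Nat.find hex with hs0def
      obtain ⟨hs0lt, hs0ne⟩ := Nat.find_spec hex
      have hmin : ∀ s', s' < s0 → η.getD (co A f i0 s') 0 = pat (w i0) s' := by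
        intro s' hlt
        have hnm := Nat.find_min hex hlt
        push_neg at hnm
        exact hnm (by omega)
      set i := co A f i0 s0 with hidef
      have hiA : i ∈ A := aE_mem A hA _
      have hia : a ≤ i := hco_ge s0
      have hib : i < b := hco_lt s0 hs0lt
      have hi1 : i + 1 ≤ b + 1 := by omega
      have hex2 : ∃ s, s < f i0 ∧ co A f i0 s = i := ⟨s0, hs0lt, rfl⟩
      refine ⟨i, ⟨hiA, hia, hib⟩, ?_⟩
      beta_reduce
      rw [dif_pos hex2]
      have hch : hex2.choose = s0 := co_inj A f hA hex2.choose_spec.2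
      rw [hch]
      have hlen_take : (η.take (i + 1)).length = i + 1 := by
        rw [List.length_take, hηlen]
        omega
      have hηlen' : i + 1 ≤ η.length := by rw [hηlen]; omega
      refine ⟨⟨?_, le_of_eq hlen_take, ?_, ?_⟩, hlen_take⟩
      · intro k hk
        rw [hlen_take] at hk
        rw [take_getD hk hηlen']
        exact hηT.1 k (by omega)
      · intro s' hs' hco
        rw [hlen_take] at hco
        rw [take_getD hco hηlen']
        exact hmin s' hs'
      · intro _
        rw [take_getD (by omega) hηlen']
        constructor
        · exact hs0ne
        · exact hηT.2.1 i (by omega) hiA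

-- ### consumption: the box Bset is not in the ideal

lemma inf_tree_extend {T : Set Node} (hT : IsInfTree H T) :
    ∀ η ∈ T, ∀ L, η.length ≤ L → ∃ ν ∈ T, η <+: ν ∧ ν.length = L := by
  intro η hη L
  induction L with
  | zero =>
    intro h
    exact ⟨η, hη, List.prefix_refl _, by omega⟩
  | succ L ih =>
    intro h
    rcases Nat.lt_or_ge L η.length with hc | hc
    · exact ⟨η, hη, List.prefix_refl _, by omega⟩
    · obtain ⟨ν, hν, hpre, hlen⟩ := ih hc
      obtain ⟨ν₂, hν₂, hpre₂, hne₂⟩ := hT.2.2 ν hν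
      have hlt : ν.length < ν₂.length := by
        rcases Nat.lt_or_ge ν.length ν₂.length with h' | h'
        · exact h'
        · exact absurd (hpre₂.eq_of_length (le_antisymm hpre₂.length_le h')) hne₂
      refine ⟨ν₂.take (ν.length + 1), hT.1.2 ν₂ hν₂ _ (List.take_prefix _ _), ?_, ?_⟩
      · have hν1 : ν = ν₂.take ν.length := List.prefix_iff_eq_take.mp hpre₂
        have h2 : ν <+: ν₂.take (ν.length + 1) := by
          nth_rewrite 1 [hν1]
          exact take_prefix_take (by omega)
        exact hpre.trans h2
      · rw [List.length_take]
        omega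

lemma fin_below_rigid {T : Set Node} (hT : IsInfTree H T) {b N : ℕ}
    (hfin : IsFinTree H (below T (b + 1)) N) : N = b + 1 := by
  obtain ⟨ν, hν, _, hlen⟩ := inf_tree_extend H hT [] hT.1.1 (b + 1) (by simp)
  have h1 : b + 1 ≤ N := by
    have := (hfin.2.1 ν ⟨hν, by omega⟩).2
    omega
  obtain ⟨ν', hν', _, hlen'⟩ := hfin.2.2 [] ⟨hT.1.1, by simp⟩
  have h2 : N ≤ b + 1 := by
    have := hν'.2
    omega
  omega

lemma pick_exists (hH : ∀ n, 2 ≤ H n) {Y : Set Node} {i : ℕ}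
    (hfin : IsFinTree H Y (i + 1)) (hF2 : F2fn Y ≤ (g i : NNReal)) :
    ∃ y, y ≤ g i + 1 ∧ ∀ τ ∈ levelSet Y (i + 1), τ.getD i 0 ≠ y := by
  by_cases hne : (levelSet Y (i + 1)).Nonempty
  · obtain ⟨τ0, hτ0⟩ := hne
    have hlev : treeLev Y = i + 1 :=
      treeLev_eq _ _ (fun η hη => (hfin.2.1 η hη).2) ⟨τ0, hτ0.1, hτ0.2⟩
    have hF2' : ((({k | ∃ η ∈ levelSet Y (treeLev Y), η.getLast? = some k}).ncard - 1 : ℕ) :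
        NNReal) ≤ ((g i : ℕ) : NNReal) := hF2
    have hcard1 : ({k | ∃ η ∈ levelSet Y (treeLev Y), η.getLast? = some k}).ncard - 1 ≤ g i :=
      Nat.cast_le.mp hF2'
    have hWsub : {k | ∃ η ∈ levelSet Y (treeLev Y), η.getLast? = some k} ⊆ Set.Iio (H i) := by
      rintro k ⟨η, ⟨hη, hlenη⟩, hlast⟩
      rw [hlev] at hlenη
      rw [lastD hlenη] at hlast
      have hk : η.getD i 0 = k := Option.some.inj hlast
      rw [← hk]
      exact (hfin.2.1 η hη).1 i (by omega)
    have hWfin : {k | ∃ η ∈ levelSet Y (treeLev Y), η.getLast? = some k}.Finite :=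
      (Set.finite_Iio _).subset hWsub
    have hex : ∃ y, y ≤ g i + 1 ∧ y ∉ {k | ∃ η ∈ levelSet Y (treeLev Y), η.getLast? = some k} := by
      by_contra hcon
      push_neg at hcon
      have hsub2 : Set.Iic (g i + 1) ⊆ {k | ∃ η ∈ levelSet Y (treeLev Y), η.getLast? = some k} :=
        fun y hy => hcon y hy
      have hcard2 := Set.ncard_le_ncard hsub2 hWfin
      rw [← Finset.coe_Iic, Set.ncard_coe_finset, Nat.card_Iic] at hcard2
      omega
    obtain ⟨y, hy1, hy2⟩ := hex
    refine ⟨y, hy1, ?_⟩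
    intro τ hτ hτeq
    refine hy2 ⟨τ, ?_, ?_⟩
    · rw [hlev]; exact hτ
    · rw [lastD hτ.2, hτeq]
  · refine ⟨0, by omega, ?_⟩
    intro τ hτ _
    exact hne ⟨τ, hτ⟩

lemma kill_step (hA : A.Infinite) (hH : ∀ n, 2 ≤ H n) (hg : ∀ n, g n + 1 < H n)
    {T : Set Node} (hinf : IsInfTree H T)
    (hnar : IsNarrowG (GgA H g A F2fn) T) (ρ : Node)
    (hρ1 : IsHNode H ρ) (hρ2 : Alph g A ρ) :
    ∃ ρ' : Node, IsHNode H ρ' ∧ Alph g A ρ' ∧ ρ <+: ρ' ∧ ρ.length < ρ'.length ∧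
      ∃ k ≤ ρ'.length, ρ'.take k ∉ T := by
  classical
  obtain ⟨a, ha, b, hab, hmem⟩ := hnar ρ.length
  rcases hmem with h0 | ⟨S', a', b', N, heq, hfin, hab', hbN, hesc, Y, hY1, hY2⟩
  · exfalso
    have hb0 : b = 0 := by
      have := congrArg (fun p : Set Node × ℕ × ℕ => p.2.2) h0
      simpa using this
    omega
  · have hSeq : below T (b + 1) = S' := congrArg Prod.fst heq
    have haeq : a = a' := congrArg (fun p : Set Node × ℕ × ℕ => p.2.1) heq
    have hbeq : b = b' := congrArg (fun p : Set Node × ℕ × ℕ => p.2.2) heq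
    subst hSeq
    subst haeq
    subst hbeq
    have hN : N = b + 1 := fin_below_rigid H hinf hfin
    subst hN
    have hpick : ∀ i : ℕ, ∃ y, y ≤ g i + 1 ∧
        (i ∈ A ∩ Set.Ico a b → ∀ τ ∈ levelSet (Y i) (i + 1), τ.getD i 0 ≠ y) := by
      intro i
      by_cases hi : i ∈ A ∩ Set.Ico a b
      · obtain ⟨hf1, hf2⟩ := hY1 i hi
        obtain ⟨y, hy1, hy2⟩ := pick_exists H g hH hf1 hf2
        exact ⟨y, hy1, fun _ => hy2⟩
      · exact ⟨0, by omega, fun h => absurd h hi⟩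
    choose pk hpk1 hpk2 using hpick
    set ρ' := fillExt ρ (b + 1) (fun j => if j ∈ A ∩ Set.Ico a b then pk j else 0) with hρ'
    have hρlen : ρ.length ≤ b + 1 := by omega
    have hρ'len : ρ'.length = b + 1 := fillExt_length _ hρlen
    have hval : ∀ j, ρ.length ≤ j → j < b + 1 →
        ρ'.getD j 0 = if j ∈ A ∩ Set.Ico a b then pk j else 0 :=
      fun j h1 h2 => fillExt_getD_hi _ h1 h2
    refine ⟨ρ', ?_, ?_, fillExt_prefix _ _ _, by omega, b + 1, by omega, ?_⟩
    · intro j hj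
      rw [hρ'len] at hj
      rcases Nat.lt_or_ge j ρ.length with hc | hc
      · rw [fillExt_getD_lo _ hc]; exact hρ1 j hc
      · rw [hval j hc hj]
        split
        · have := hpk1 j; have := hg j; omega
        · have := hH j; omega
    · intro j hj hjA
      rw [hρ'len] at hj
      rcases Nat.lt_or_ge j ρ.length with hc | hc
      · rw [fillExt_getD_lo _ hc]; exact hρ2 j hc hjA
      · rw [hval j hc hj]
        split
        · exact hpk1 j
        · omega
    · have htake : ρ'.take (b + 1) = ρ' := by
        rw [← hρ'len, List.take_length]
      rw [htake]
      intro hmemT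
      have hlev : ρ' ∈ levelSet (below T (b + 1)) (b + 1) := ⟨⟨hmemT, by omega⟩, hρ'len⟩
      obtain ⟨i, hiI, htk⟩ := hY2 ρ' hlev
      have hia2 : a ≤ i := hiI.2.1
      have hib2 : i < b := hiI.2.2
      have hgd : (ρ'.take (i + 1)).getD i 0 = ρ'.getD i 0 := take_getD (by omega) (by omega)
      have hval2 : ρ'.getD i 0 = pk i := by
        rw [hval i (by omega) (by omega), if_pos hiI]
      exact hpk2 i hiI _ htk (by rw [hgd, hval2])

lemma Bset_not_mem (hA : A.Infinite) (hH : ∀ n, 2 ≤ H n) (hg : ∀ n, g n + 1 < H n) :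
    Bset H g A ∉ IpG H (GgA H g A F2fn) := by
  classical
  rintro ⟨F, hNC, hsub⟩
  choose T hTinf hTnar hTeq using hNC
  have hstep : ∀ (n : ℕ) (p : {l : Node // IsHNode H l ∧ Alph g A l}),
      ∃ q : {l : Node // IsHNode H l ∧ Alph g A l},
        p.1 <+: q.1 ∧ p.1.length < q.1.length ∧ ∃ k ≤ q.1.length, q.1.take k ∉ T n := by
    intro n p
    obtain ⟨ρ', h1, h2, h3, h4, h5⟩ :=
      kill_step H g A hA hH hg (hTinf n) (hTnar n) p.1 p.2.1 p.2.2
    exact ⟨⟨ρ', h1, h2⟩, h3, h4, h5⟩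
  choose stepF hpre hlen hkill using hstep
  have hnil : IsHNode H ([] : Node) ∧ Alph g A ([] : Node) := by
    constructor
    · intro i hi; simp at hi
    · intro j hj; simp at hj
  set ch : ℕ → {l : Node // IsHNode H l ∧ Alph g A l} :=
    fun n => Nat.rec ⟨[], hnil⟩ (fun n ih => stepF n ih) n with hch
  have hchS : ∀ n, ch (n + 1) = stepF n (ch n) := fun n => rfl
  have hchain : ∀ p q, p ≤ q → (ch p).1 <+: (ch q).1 := by
    intro p q h
    induction q with
    | zero =>
      have : p = 0 := by omega
      subst this; exact List.prefix_refl _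
    | succ q ih =>
      rcases Nat.lt_or_ge p (q + 1) with hc | hc
      · refine (ih (by omega)).trans ?_
        rw [hchS q]
        exact hpre q (ch q)
      · have : p = q + 1 := by omega
        subst this; exact List.prefix_refl _
  have hlen' : ∀ n, n ≤ (ch n).1.length := by
    intro n
    induction n with
    | zero => exact Nat.zero_le _
    | succ n ih =>
      have h2 := hlen n (ch n)
      rw [← hchS n] at h2
      omega
  set x : XSp H := fun j =>
    ⟨(ch (j + 1)).1.getD j 0, (ch (j + 1)).2.1 j (by have := hlen' (j + 1); omega)⟩ with hx
  have hxval : ∀ j, (x j : ℕ) = (ch (j + 1)).1.getD j 0 := fun j => rfl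
  have hstable : ∀ n j, j < (ch n).1.length → (ch n).1.getD j 0 = (x j : ℕ) := by
    intro n j hj
    rw [hxval]
    rcases le_total n (j + 1) with hc | hc
    · exact (getD_of_prefix (hchain n (j + 1) hc) hj).symm
    · exact getD_of_prefix (hchain (j + 1) n hc) (by have := hlen' (j + 1); omega)
  have hbn : ∀ n k, k ≤ (ch n).1.length → branchNode H x k = (ch n).1.take k := by
    intro n k hk
    apply List.ext_getElem
    · rw [bn_length, List.length_take]
      omega
    · intro r h1 h2
      have hr : r < k := by
        have := bn_length H x k
        omega
      have hrn : r < (ch n).1.length := by omega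
      rw [List.getElem_take]
      have e1 : (branchNode H x k)[r]'h1 = ((x r : ℕ)) := by
        simp [branchNode]
      rw [e1, ← List.getD_eq_getElem _ 0 hrn]
      exact (hstable n r hrn).symm
  have hxB : x ∈ Bset H g A := by
    intro j hjA
    rw [hxval]
    exact (ch (j + 1)).2.2 j (by have := hlen' (j + 1); omega) hjA
  have hxmem := hsub hxB
  rw [Set.mem_iUnion] at hxmem
  obtain ⟨n, hn⟩ := hxmem
  rw [hTeq n] at hn
  obtain ⟨k, hk, hnot⟩ := hkill n (ch n)
  rw [← hchS n] at hk hnot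
  refine hnot ?_
  rw [← hbn (n + 1) k hk]
  exact hn k

lemma Z_mem (hA : A.Infinite) (hf : ∀ i, 2 ≤ f i) (hH : ∀ n, 2 ≤ H n)
    (w : ℕ → ℕ) :
    (⋃ m, branches H (TT H g A f m w)) ∈ IpG H (GgA H g A F2fn) :=
  ⟨fun m => branches H (TT H g A f m w),
    fun m => ⟨TT H g A f m w, TT_inf H g A f hA hf hH m w,
      TT_narrow H g A f hA hf hH m w, rfl⟩,
    Set.Subset.rfl⟩

end C48




/-- Claim 4.8: fewer than `add(ℐ_𝔭)` many members of `∏_i f(i)` admit an infinitely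
often equal function `f* ∈ ∏_i f(i)`, where `𝔭 = (𝒢^{g,A}_{𝐅₂}, F_H)`. -/
theorem infinitely_equal_below_add (H : ℕ → ℕ) (hH : ∀ n, 2 ≤ H n)
    (g : ℕ → ℕ) (hg : ∀ n, g n + 1 < H n) (A : Set ℕ) (hA : A.Infinite)
    (f : ℕ → ℕ) (hf : ∀ i, 2 ≤ f i) (ι : Type) (fam : ι → (ℕ → ℕ))
    (hι : Cardinal.mk ι < addIdeal (IpG H (GgA H g A F2fn)))
    (hfam : ∀ α i, fam α i < f i) :
    ∃ fstar : ℕ → ℕ, (∀ i, fstar i < f i) ∧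
      ∀ α, ∀ m, ∃ i, m ≤ i ∧ fstar i = fam α i := by
  classical
  set Z : ι → Set (XSp H) := fun α => ⋃ m, branches H (C48.TT H g A f m (fam α)) with hZdef
  have hZ : ∀ α, Z α ∈ IpG H (GgA H g A F2fn) :=
    fun α => C48.Z_mem H g A f hA hf hH (fam α)
  have hU : (⋃ α, Z α) ∈ IpG H (GgA H g A F2fn) := by
    by_contra hcon
    have hmem : Cardinal.mk (Set.range Z) ∈
        {c | ∃ 𝒜 : Set (Set (XSp H)), 𝒜 ⊆ IpG H (GgA H g A F2fn) ∧
          ⋃₀ 𝒜 ∉ IpG H (GgA H g A F2fn) ∧ Cardinal.mk 𝒜 = c} := by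
      refine ⟨Set.range Z, ?_, ?_, rfl⟩
      · rintro _ ⟨α, rfl⟩; exact hZ α
      · rwa [Set.sUnion_range]
    have h1 : addIdeal (IpG H (GgA H g A F2fn)) ≤ Cardinal.mk (Set.range Z) :=
      csInf_le' hmem
    exact absurd (h1.trans Cardinal.mk_range_le) (not_le.mpr hι)
  have hBne : ¬ (C48.Bset H g A ⊆ ⋃ α, Z α) := by
    intro hsub
    obtain ⟨F, h1, h2⟩ := hU
    exact C48.Bset_not_mem H g A hA hH hg ⟨F, h1, hsub.trans h2⟩
  obtain ⟨x, hxB, hxU⟩ := Set.not_subset.mp hBne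
  have hmatch : ∀ (α : ι) (m : ℕ), ∃ i, m ≤ i ∧ C48.PB H A f x i (fam α i) := by
    intro α m
    have hx : x ∉ branches H (C48.TT H g A f m (fam α)) := by
      intro h
      exact hxU (Set.mem_iUnion.mpr ⟨α, Set.mem_iUnion.mpr ⟨m, h⟩⟩)
    have hx2 : ¬ ∀ L, branchNode H x L ∈ C48.TT H g A f m (fam α) := hx
    obtain ⟨L, hL⟩ := not_forall.mp hx2
    have hnode : IsHNode H (branchNode H x L) := by
      intro j hj
      rw [C48.bn_length] at hj
      rw [C48.bn_getD H x hj]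
      exact (x j).2
    have halph : C48.Alph g A (branchNode H x L) := by
      intro j hj hjA
      rw [C48.bn_length] at hj
      rw [C48.bn_getD H x hj]
      exact hxB j hjA
    have h3 : ¬ ∀ i, m ≤ i → C48.BL A f i ≤ (branchNode H x L).length →
        ¬ C48.PN A f (branchNode H x L) i (fam α i) := by
      intro h3
      exact hL ⟨hnode, halph, h3⟩
    push_neg at h3
    obtain ⟨i, him, hBL, hPN⟩ := h3
    rw [C48.bn_length] at hBL
    refine ⟨i, him, ?_⟩
    intro s hs
    have hco : C48.co A f i s < L := lt_of_lt_of_le (C48.co_lt_BL A f hA hs) hBL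
    rw [← C48.bn_getD H x hco]
    exact hPN s hs
  refine ⟨fun i => if h : ∃ v, v < f i ∧ C48.PB H A f x i v then h.choose else 0, ?_, ?_⟩
  · intro i
    beta_reduce
    by_cases h : ∃ v, v < f i ∧ C48.PB H A f x i v
    · rw [dif_pos h]; exact h.choose_spec.1
    · rw [dif_neg h]; have := hf i; omega
  · intro α m
    obtain ⟨i, him, hPB⟩ := hmatch α m
    have hex : ∃ v, v < f i ∧ C48.PB H A f x i v := ⟨fam α i, hfam α i, hPB⟩
    refine ⟨i, him, ?_⟩
    beta_reduce
    rw [dif_pos hex]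
    exact C48.PB_unique H A f hex.choose_spec.2 hPB hex.choose_spec.1 (hfam α i)


end UnivForcing
end

section
/- Suppose 𝔭 is a suitable simplified universality parameter and D ⊆ ω^ω, |D| < add(ℐ_𝔭). Then D is not dominating; equivalently, the additivity of ℐ_𝔭 is at most the dominating number: add(ℐ_𝔭) ≤ 𝔡. -/
open Set Filter MeasureTheory NNReal ENNReal

namespace UnivForcing

/-! ### Auxiliary lemmas for the proof of `add_Ip_le_d` -/

section AuxAddD

private lemma ax_getD_prefix {l m : Node} (h : l <+: m) {i : ℕ} (hi : i < l.length) :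
    l.getD i 0 = m.getD i 0 := by
  obtain ⟨t, rfl⟩ := h
  rw [List.getD_eq_getElem l 0 hi, List.getD_eq_getElem _ 0 (by simp; omega)]
  exact (List.getElem_append_left hi).symm

private lemma ax_isHNode_prefix {H : ℕ → ℕ} {l m : Node} (h : l <+: m) (hm : IsHNode H m) :
    IsHNode H l := by
  intro i hi
  rw [ax_getD_prefix h hi]
  exact hm i (lt_of_lt_of_le hi h.length_le)

private lemma ax_take_eq_of_prefix {l m : Node} (h : l <+: m) {n : ℕ} (hn : n ≤ l.length) :
    m.take n = l.take n := by
  obtain ⟨t, rfl⟩ := h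
  exact List.take_append_of_le_length hn

private lemma ax_isHNode_nil {H : ℕ → ℕ} : IsHNode H ([] : Node) := by
  intro i hi
  simp at hi

private lemma ax_pad {H : ℕ → ℕ} (hH : ∀ n, 0 < H n) (η : Node) (L : ℕ)
    (hη : IsHNode H η) (hL : η.length ≤ L) :
    ∃ ν : Node, η <+: ν ∧ ν.length = L ∧ IsHNode H ν := by
  refine ⟨η ++ List.replicate (L - η.length) 0, List.prefix_append _ _, by simp; omega, ?_⟩
  intro i hi
  rcases lt_or_ge i η.length with h1 | h1
  · rw [← ax_getD_prefix (List.prefix_append _ _) h1]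
    exact hη i h1
  · rw [List.getD_eq_getElem _ 0 hi]
    have h2 : (η ++ List.replicate (L - η.length) 0)[i] = 0 := by
      rw [List.getElem_append_right h1]
      simp
    rw [h2]
    exact hH i

private lemma ax_fin_full {H : ℕ → ℕ} (hH : ∀ n, 0 < H n) (n : ℕ) :
    IsFinTree H {η : Node | IsHNode H η ∧ η.length ≤ n} n := by
  refine ⟨⟨⟨ax_isHNode_nil, Nat.zero_le n⟩, ?_⟩, fun η hη => ⟨hη.1, hη.2⟩, ?_⟩
  · intro η hη ν hν
    exact ⟨ax_isHNode_prefix hν hη.1, le_trans hν.length_le hη.2⟩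
  · intro η hη
    obtain ⟨ν, h1, h2, h3⟩ := ax_pad hH η n hη.1 hη.2
    exact ⟨ν, ⟨h3, le_of_eq h2⟩, h1, h2⟩

private lemma ax_reach_inf {H : ℕ → ℕ} {T : Set Node} (hT : IsInfTree H T) :
    ∀ L, ∀ η ∈ T, η.length ≤ L → ∃ ν ∈ T, η <+: ν ∧ ν.length = L := by
  intro L
  induction L with
  | zero => exact fun η hη hl => ⟨η, hη, List.prefix_refl _, Nat.le_zero.mp hl⟩
  | succ L ih =>
    intro η hη hl
    rcases eq_or_lt_of_le hl with h | h
    · exact ⟨η, hη, List.prefix_refl _, h⟩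
    · obtain ⟨ν, hν, hp, hlen⟩ := ih η hη (by omega)
      obtain ⟨ν', hν', hp', hne⟩ := hT.2.2 ν hν
      have hlt : ν.length < ν'.length := by
        rcases lt_or_eq_of_le hp'.length_le with h' | h'
        · exact h'
        · exact absurd (hp'.eq_of_length h') hne
      refine ⟨ν'.take (L+1), hT.1.2 ν' hν' _ (List.take_prefix _ _), ?_,
        by rw [List.length_take]; omega⟩
      refine List.prefix_of_prefix_length_le (hp.trans hp') (List.take_prefix _ _) ?_
      rw [List.length_take]; omega

private lemma ax_below_fin {H : ℕ → ℕ} {T : Set Node} (hT : IsInfTree H T) (N : ℕ) :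
    IsFinTree H (below T N) N := by
  refine ⟨⟨⟨hT.1.1, Nat.zero_le N⟩, ?_⟩, fun η hη => ⟨hT.2.1 η hη.1, hη.2⟩, ?_⟩
  · intro η hη ν hν
    exact ⟨hT.1.2 η hη.1 ν hν, le_trans hν.length_le hη.2⟩
  · intro η hη
    obtain ⟨ν, hν, hp, hlen⟩ := ax_reach_inf hT N η hη.1 hη.2
    exact ⟨ν, ⟨hν, le_of_eq hlen⟩, hp, hlen⟩

private lemma ax_exists_Sb {H : ℕ → ℕ} (hH : ∀ n, 0 < H n) (p : UnivParam H)
    (hp : Suitable p) :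
    ∀ n : ℕ, ∃ S M, IsFinTree H S M ∧ (S, n, M) ∈ p.G ∧ n < M ∧
      ∀ η : Node, IsHNode H η → η.length ≤ n → η ∈ S := by
  intro n
  obtain ⟨N, hnN, hprop⟩ := hp.2 n
  obtain ⟨η₀, -, hη₀len, hη₀H⟩ := ax_pad hH [] N ax_isHNode_nil (Nat.zero_le N)
  have hfull := ax_fin_full hH n
  have htk : η₀.take n ∈ {η : Node | IsHNode H η ∧ η.length ≤ n} :=
    ⟨ax_isHNode_prefix (List.take_prefix _ _) hη₀H, by rw [List.length_take]; omega⟩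
  obtain ⟨S', a, b, hG, hna, hab, hbN, hsub, hlev, hmem⟩ := hprop _ hfull η₀ hη₀H hη₀len htk
  obtain ⟨L, hL, hab', hbL⟩ := p.G_tree S' a b hG
  have hG2 : (S', n, L) ∈ p.G :=
    p.G_mono S' a b L S' L hG hL hL le_rfl (fun ν hν => hν.1) n L (le_of_lt hna) hbL le_rfl
  exact ⟨S', L, hL, hG2, lt_of_lt_of_le hna (le_trans hab hbL), fun η h1 h2 => hsub ⟨h1, h2⟩⟩

private lemma ax_tree {H : ℕ → ℕ} (hH : ∀ n, 0 < H n) (p : UnivParam H)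
    (Sb : ℕ → Set Node) (Mb : ℕ → ℕ)
    (hfin : ∀ n, IsFinTree H (Sb n) (Mb n)) (hG : ∀ n, (Sb n, n, Mb n) ∈ p.G)
    (hlt : ∀ n, n < Mb n) (hfull : ∀ n, ∀ η : Node, IsHNode H η → η.length ≤ n → η ∈ Sb n)
    (ns : ℕ → ℕ) (hns : ∀ k, Mb (ns k) < ns (k+1)) :
    IsInfTree H {η : Node | IsHNode H η ∧ ∀ k, η.take (Mb (ns k)) ∈ Sb (ns k)} ∧
    IsNarrowG p.G {η : Node | IsHNode H η ∧ ∀ k, η.take (Mb (ns k)) ∈ Sb (ns k)} ∧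
    (∀ η ∈ {η : Node | IsHNode H η ∧ ∀ k, η.take (Mb (ns k)) ∈ Sb (ns k)}, ∀ L,
      η.length ≤ L →
      ∃ ν ∈ {η : Node | IsHNode H η ∧ ∀ k, η.take (Mb (ns k)) ∈ Sb (ns k)},
        η <+: ν ∧ ν.length = L) := by
  set T : Set Node := {η : Node | IsHNode H η ∧ ∀ k, η.take (Mb (ns k)) ∈ Sb (ns k)} with hTdef
  have hmono : StrictMono ns := strictMono_nat_of_lt_succ (fun k => lt_trans (hlt (ns k)) (hns k))
  have hgrow : ∀ k, k ≤ ns k := by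
    intro k
    induction k with
    | zero => exact Nat.zero_le _
    | succ k ih => have := hmono (show k < k + 1 by omega); omega
  have hshort : ∀ (η : Node), IsHNode H η → ∀ k, η.length ≤ ns k →
      η.take (Mb (ns k)) ∈ Sb (ns k) := by
    intro η hη k hk
    rw [List.take_of_length_le (le_trans hk (hlt (ns k)).le)]
    exact hfull (ns k) η hη hk
  have htree : IsTreeSet T := by
    constructor
    · exact ⟨ax_isHNode_nil, fun k => hshort [] ax_isHNode_nil k (Nat.zero_le _)⟩
    · intro η hη ν hν
      refine ⟨ax_isHNode_prefix hν hη.1, fun k => ?_⟩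
      have h1 : ν.take (Mb (ns k)) <+: η.take (Mb (ns k)) :=
        List.prefix_of_prefix_length_le ((List.take_prefix _ _).trans hν) (List.take_prefix _ _)
          (by have := hν.length_le; rw [List.length_take, List.length_take]; omega)
      exact (hfin (ns k)).1.2 _ (hη.2 k) _ h1
  have hstep : ∀ η ∈ T, ∃ ν ∈ T, η <+: ν ∧ ν.length = η.length + 1 := by
    intro η hη
    by_cases hact : ∃ k, ns k ≤ η.length ∧ η.length < Mb (ns k)
    · obtain ⟨k, hk1, hk2⟩ := hact
      have hηS : η ∈ Sb (ns k) := by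
        have h := hη.2 k
        rwa [List.take_of_length_le hk2.le] at h
      obtain ⟨ζ, hζ, hpζ, hζlen⟩ := (hfin (ns k)).2.2 η hηS
      have hνS : ζ.take (η.length + 1) ∈ Sb (ns k) :=
        (hfin (ns k)).1.2 ζ hζ _ (List.take_prefix _ _)
      have hνlen : (ζ.take (η.length + 1)).length = η.length + 1 := by
        rw [List.length_take]; omega
      have hpν : η <+: ζ.take (η.length + 1) :=
        List.prefix_of_prefix_length_le hpζ (List.take_prefix _ _) (by omega)
      have hνH : IsHNode H (ζ.take (η.length + 1)) := ((hfin (ns k)).2.1 _ hνS).1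
      refine ⟨ζ.take (η.length + 1), ⟨hνH, fun j => ?_⟩, hpν, hνlen⟩
      rcases le_or_gt (ζ.take (η.length + 1)).length (ns j) with hA | hB
      · exact hshort _ hνH j hA
      · have hje : ns j ≤ η.length := by omega
        rcases le_or_gt (Mb (ns j)) η.length with hC | hD
        · rw [ax_take_eq_of_prefix hpν hC]
          exact hη.2 j
        · have hjk : j = k := by
            rcases Nat.lt_trichotomy j k with h | h | h
            · exfalso
              have h1 : ns (j+1) ≤ ns k := hmono.monotone (by omega)
              have h2 := hns j
              omega
            · exact h
            · exfalso
              have h1 : ns (k+1) ≤ ns j := hmono.monotone (by omega)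
              have h2 := hns k
              omega
          subst hjk
          rwa [List.take_of_length_le (by omega)]
    · push_neg at hact
      obtain ⟨ν, hpν, hνlen, hνH⟩ := ax_pad hH η (η.length + 1) hη.1 (by omega)
      refine ⟨ν, ⟨hνH, fun j => ?_⟩, hpν, hνlen⟩
      rcases le_or_gt ν.length (ns j) with hA | hB
      · exact hshort ν hνH j hA
      · have hje : ns j ≤ η.length := by omega
        have hC : Mb (ns j) ≤ η.length := hact j hje
        rw [ax_take_eq_of_prefix hpν hC]
        exact hη.2 j
  have hreach : ∀ η ∈ T, ∀ L, η.length ≤ L → ∃ ν ∈ T, η <+: ν ∧ ν.length = L := by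
    intro η hη L
    induction L with
    | zero => exact fun h => ⟨η, hη, List.prefix_refl _, Nat.le_zero.mp h⟩
    | succ L ih =>
      intro h
      rcases eq_or_lt_of_le h with h' | h'
      · exact ⟨η, hη, List.prefix_refl _, h'⟩
      · obtain ⟨ν, hν, hp, hlen⟩ := ih (by omega)
        obtain ⟨ν', hν', hp', hlen'⟩ := hstep ν hν
        exact ⟨ν', hν', hp.trans hp', by omega⟩
  have hinf : IsInfTree H T := by
    refine ⟨htree, fun η hη => hη.1, fun η hη => ?_⟩
    obtain ⟨ν, hν, hp, hlen⟩ := hstep η hη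
    exact ⟨ν, hν, hp, fun he => by rw [he] at hlen; omega⟩
  refine ⟨hinf, ?_, hreach⟩
  intro m
  refine ⟨ns m, hgrow m, ns (m+1) - 1, ?_, ?_⟩
  · have h1 := hns m; have h2 := hlt (ns m); omega
  · have hb1 : ns (m+1) - 1 + 1 = ns (m+1) := by
      have := hns m; omega
    rw [hb1]
    have hbelowfin : IsFinTree H (below T (ns (m+1))) (ns (m+1)) := ax_below_fin hinf _
    refine p.G_mono (Sb (ns m)) (ns m) (Mb (ns m)) (Mb (ns m)) (below T (ns (m+1))) (ns (m+1))
      (hG (ns m)) (hfin (ns m)) hbelowfin (hns m).le ?_ (ns m) (ns (m+1) - 1) le_rfl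
      (by have := hns m; omega) (by omega)
    rintro ν ⟨⟨hνT, -⟩, hνlen⟩
    have h1 := hνT.2 m
    rwa [List.take_of_length_le (le_of_eq hνlen)] at h1

end AuxAddD

/-- `add(ℐ_𝔭) ≤ 𝔡`: any family of functions of size less than `add(ℐ_𝔭)` is not
dominating. -/
theorem add_Ip_le_d (H : ℕ → ℕ) (hH : ∀ n, 2 ≤ H n) (p : UnivParam H)
    (hp : Suitable p) :
    (∀ D : Set (ℕ → ℕ), Cardinal.mk D < addIdeal (IpG H p.G) →
      ∃ g : ℕ → ℕ, ∀ f ∈ D, ¬ evDomLE g f) ∧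
    addIdeal (IpG H p.G) ≤ dNum := by
  classical
  have hH0 : ∀ n, 0 < H n := fun n => lt_of_lt_of_le (by norm_num) (hH n)
  choose Sb Mb hfin hGb hltb hfullb using ax_exists_Sb hH0 p hp
  choose N1 hN1 using hp.1
  have hnsEx : ∀ f : ℕ → ℕ, ∃ ns : ℕ → ℕ, ns 0 = 0 ∧
      ∀ k, ns (k+1) = max (f (Mb (ns k))) (Mb (ns k)) + 1 :=
    fun f => ⟨fun k => Nat.rec 0 (fun _ nk => max (f (Mb nk)) (Mb nk) + 1) k, rfl,
      fun _ => rfl⟩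
  choose nsq hnsq0 hnsqS using hnsEx
  have hnsq : ∀ f k, Mb (nsq f k) < nsq f (k+1) := by
    intro f k; rw [hnsqS f k]; omega
  have hTfEx : ∀ f : ℕ → ℕ, ∃ Tq : Set Node,
      Tq = {η : Node | IsHNode H η ∧ ∀ k, η.take (Mb (nsq f k)) ∈ Sb (nsq f k)} :=
    fun f => ⟨_, rfl⟩
  choose Tf hTfeq using hTfEx
  have hTf : ∀ f : ℕ → ℕ, IsInfTree H (Tf f) ∧ IsNarrowG p.G (Tf f) ∧
      (∀ η ∈ Tf f, ∀ L, η.length ≤ L → ∃ ν ∈ Tf f, η <+: ν ∧ ν.length = L) := by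
    intro f
    rw [hTfeq f]
    exact ax_tree hH0 p Sb Mb hfin hGb hltb hfullb (nsq f) (hnsq f)
  have hφI : ∀ f : ℕ → ℕ, branches H (Tf f) ∈ IpG H p.G := by
    intro f
    refine ⟨fun _ => branches H (Tf f), fun n => ⟨Tf f, (hTf f).1, (hTf f).2.1, rfl⟩, ?_⟩
    exact fun x hx => Set.mem_iUnion.mpr ⟨0, hx⟩
  have key : ∀ D : Set (ℕ → ℕ), Cardinal.mk D < addIdeal (IpG H p.G) →
      ∃ g : ℕ → ℕ, ∀ f ∈ D, ¬ evDomLE g f := by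
    intro D hD
    by_contra hno
    push_neg at hno
    -- the union of the family of closed narrow sets is in the ideal
    have hUA : ⋃₀ ((fun f => branches H (Tf f)) '' D) ∈ IpG H p.G := by
      by_contra hU
      have hmem : Cardinal.mk ((fun f => branches H (Tf f)) '' D) ∈
          {c | ∃ A : Set (Set (XSp H)), A ⊆ IpG H p.G ∧ ⋃₀ A ∉ IpG H p.G ∧
            Cardinal.mk A = c} := by
        refine ⟨(fun f => branches H (Tf f)) '' D, ?_, hU, rfl⟩
        rintro B ⟨f, -, rfl⟩
        exact hφI f
      have h1 : addIdeal (IpG H p.G) ≤ Cardinal.mk ((fun f => branches H (Tf f)) '' D) :=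
        csInf_le (OrderBot.bddBelow _) hmem
      have h2 : Cardinal.mk ((fun f => branches H (Tf f)) '' D) ≤ Cardinal.mk D :=
        Cardinal.mk_image_le
      exact absurd hD (not_lt.mpr (le_trans h1 h2))
    obtain ⟨C, hCnar, hCsub⟩ := hUA
    choose Tb hTbinf hTbnar hTbeq using hCnar
    -- choose escape levels
    have hBex : ∀ j r : ℕ, ∃ ba : ℕ × ℕ, N1 r ≤ ba.2 ∧ ba.2 < ba.1 ∧
        (below (Tb j) (ba.1 + 1), ba.2, ba.1) ∈ p.G := by
      intro j r
      obtain ⟨a, ha, b, hab, hmem⟩ := hTbnar j (N1 r)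
      exact ⟨(b, a), ha, hab, hmem⟩
    choose B hB1 hB2 hB3 using hBex
    obtain ⟨f, hfD, hgf⟩ := hno (fun r => (Finset.range (r+1)).sup (fun j => (B j r).1) + 1)
    obtain ⟨r₀, hr₀⟩ := Filter.eventually_atTop.mp hgf
    have hmono : StrictMono (nsq f) :=
      strictMono_nat_of_lt_succ (fun k => lt_trans (hltb (nsq f k)) (hnsq f k))
    have hgrow : ∀ k, k ≤ nsq f k := by
      intro k
      induction k with
      | zero => exact Nat.zero_le _
      | succ k ih => have := hmono (show k < k + 1 by omega); omega
    have hreach := (hTf f).2.2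
    -- one step of the escape construction
    have hstep : ∀ (j : ℕ) (t : Node), ∃ t' : Node,
        (t ∈ Tf f ∧ t.length = Mb (nsq f (r₀ + j))) →
        (t' ∈ Tf f ∧ t'.length = Mb (nsq f (r₀ + j + 1)) ∧ t <+: t' ∧
          ∃ c, Mb (nsq f (r₀ + j)) < c ∧ c ≤ t'.length ∧ t'.take c ∉ Tb j) := by
      intro j t
      by_cases hpre : t ∈ Tf f ∧ t.length = Mb (nsq f (r₀ + j))
      swap
      · exact ⟨t, fun h => absurd h hpre⟩
      obtain ⟨htT, htlen⟩ := hpre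
      have hkr : r₀ + j ≤ nsq f (r₀ + j) := hgrow (r₀ + j)
      have hrns : nsq f (r₀ + j) < Mb (nsq f (r₀ + j)) := hltb (nsq f (r₀ + j))
      have hrr₀ : r₀ ≤ Mb (nsq f (r₀ + j)) := by omega
      have hUfin : IsFinTree H (below (Tb j) ((B j (Mb (nsq f (r₀ + j)))).1 + 1))
          ((B j (Mb (nsq f (r₀ + j)))).1 + 1) := ax_below_fin (hTbinf j) _
      have htH : IsHNode H t := (hTf f).1.2.1 t htT
      obtain ⟨ν, hνH, hνlen, hνp, hνnot⟩ :=
        (hN1 (Mb (nsq f (r₀ + j)))).2 _ _ _ _ (hB3 j (Mb (nsq f (r₀ + j)))) hUfin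
          (hB1 j (Mb (nsq f (r₀ + j)))) t htH htlen
      have hBb : (B j (Mb (nsq f (r₀ + j)))).1 <
          ((Finset.range (Mb (nsq f (r₀ + j)) + 1)).sup
            (fun j' => (B j' (Mb (nsq f (r₀ + j)))).1)) + 1 :=
        Nat.lt_succ_of_le (Finset.le_sup (f := fun j' => (B j' (Mb (nsq f (r₀ + j)))).1)
          (Finset.mem_range.mpr (show j < Mb (nsq f (r₀ + j)) + 1 by omega)))
      have hgle : ((Finset.range (Mb (nsq f (r₀ + j)) + 1)).sup
            (fun j' => (B j' (Mb (nsq f (r₀ + j)))).1)) + 1 ≤ f (Mb (nsq f (r₀ + j))) :=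
        hr₀ (Mb (nsq f (r₀ + j))) hrr₀
      have hν2 : ν.length ≤ nsq f (r₀ + j + 1) := by
        have h3 := hnsqS f (r₀ + j)
        omega
      obtain ⟨ρ, hρp, hρlen, hρH⟩ := ax_pad hH0 ν (nsq f (r₀ + j + 1)) hνH hν2
      have htρ : t <+: ρ := hνp.trans hρp
      have hρT : ρ ∈ Tf f := by
        rw [hTfeq f]
        refine ⟨hρH, fun i => ?_⟩
        rcases le_or_gt ρ.length (nsq f i) with hA | hB
        · rw [List.take_of_length_le (le_trans hA (hltb (nsq f i)).le)]
          exact hfullb (nsq f i) ρ hρH hA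
        · have hik : i ≤ r₀ + j := by
            by_contra hik
            have h1 : nsq f (r₀ + j + 1) ≤ nsq f i := hmono.monotone (by omega)
            omega
          have hMle : Mb (nsq f i) ≤ t.length := by
            rcases eq_or_lt_of_le hik with he | hl
            · subst he; omega
            · have h1 : nsq f (i+1) ≤ nsq f (r₀ + j) := hmono.monotone (by omega)
              have h2 := hnsq f i
              have h3 := hltb (nsq f (r₀ + j))
              omega
          rw [ax_take_eq_of_prefix htρ hMle]
          have htT' := htT
          rw [hTfeq f] at htT'
          exact htT'.2 i
      obtain ⟨t', ht'T, hρt', ht'len⟩ := hreach ρ hρT (Mb (nsq f (r₀ + j + 1)))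
        (by rw [hρlen]; exact (hltb _).le)
      refine ⟨t', fun _ => ⟨ht'T, ht'len, htρ.trans hρt',
        (B j (Mb (nsq f (r₀ + j)))).1 + 1, ?_, ?_, ?_⟩⟩
      · have h1 := (hN1 (Mb (nsq f (r₀ + j)))).1
        have h2 := hB1 j (Mb (nsq f (r₀ + j)))
        have h3 := hB2 j (Mb (nsq f (r₀ + j)))
        omega
      · rw [ht'len]
        have h4 := hltb (nsq f (r₀ + j + 1))
        omega
      · have hc : t'.take ((B j (Mb (nsq f (r₀ + j)))).1 + 1) = ν := by
          have hνt' : ν <+: t' := hρp.trans hρt'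
          rw [← hνlen]
          exact (List.prefix_iff_eq_take.mp hνt').symm
        rw [hc]
        intro hmem
        exact hνnot ⟨hmem, by omega⟩
    choose stepf hstepf using hstep
    have hnilT : ([] : Node) ∈ Tf f := (hTf f).1.1.1
    obtain ⟨τ₀, hτ₀T, -, hτ₀len⟩ := hreach [] hnilT (Mb (nsq f r₀)) (by simp)
    set τ : ℕ → Node := fun j => Nat.rec τ₀ (fun j t => stepf j t) j with hτdef
    have hτbase : ∀ j, τ j ∈ Tf f ∧ (τ j).length = Mb (nsq f (r₀ + j)) := by
      intro j
      induction j with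
      | zero => exact ⟨hτ₀T, hτ₀len⟩
      | succ j ih =>
        have h := hstepf j (τ j) ih
        exact ⟨h.1, h.2.1⟩
    have hτchain : ∀ j, τ j <+: τ (j+1) := fun j => (hstepf j (τ j) (hτbase j)).2.2.1
    have hτesc : ∀ j, ∃ c, Mb (nsq f (r₀ + j)) < c ∧ c ≤ (τ (j+1)).length ∧
        (τ (j+1)).take c ∉ Tb j := fun j => (hstepf j (τ j) (hτbase j)).2.2.2
    have hchainle : ∀ a b : ℕ, a ≤ b → τ a <+: τ b := by
      intro a b hab
      induction b, hab using Nat.le_induction with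
      | base => exact List.prefix_refl _
      | succ b hb ih => exact ih.trans (hτchain b)
    have hτlarge : ∀ j, j ≤ (τ j).length := by
      intro j
      have h1 := (hτbase j).2
      have h2 := hgrow (r₀ + j)
      have h3 := hltb (nsq f (r₀ + j))
      omega
    have hxlt : ∀ i : ℕ, i < (τ (i+1)).length := fun i => by have := hτlarge (i+1); omega
    have hτH : ∀ j, IsHNode H (τ j) := fun j => (hTf f).1.2.1 (τ j) (hτbase j).1
    set x : XSp H := fun i => ⟨(τ (i+1)).getD i 0, hτH (i+1) i (hxlt i)⟩ with hxdef
    have hbx : ∀ (n j : ℕ), n ≤ (τ j).length → branchNode H x n = (τ j).take n := by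
      intro n j hn
      apply List.ext_getElem
      · simp [branchNode, List.length_take]; omega
      · intro i h1 h2
        have hin : i < n := by simpa [branchNode] using h1
        have e1 : (branchNode H x n)[i] = ((x i : ℕ)) := by
          simp [branchNode]
        rw [e1, List.getElem_take]
        have e2 : ((x i : ℕ)) = (τ (i+1)).getD i 0 := rfl
        rw [e2]
        have hij : i < (τ j).length := by omega
        rw [List.getD_eq_getElem _ 0 (hxlt i)]
        rcases le_total (i+1) j with h | h
        · exact (hchainle (i+1) j h).getElem (hxlt i)
        · exact ((hchainle j (i+1) h).getElem hij).symm
    have hxT : ∀ n, branchNode H x n ∈ Tf f := by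
      intro n
      rw [hbx n n (hτlarge n)]
      exact (hTf f).1.1.2 (τ n) (hτbase n).1 _ (List.take_prefix _ _)
    have hxU : x ∈ ⋃ n, C n :=
      hCsub (Set.mem_sUnion.mpr ⟨branches H (Tf f),
        Set.mem_image_of_mem _ hfD, fun n => hxT n⟩)
    obtain ⟨j, hj⟩ := Set.mem_iUnion.mp hxU
    rw [hTbeq j] at hj
    obtain ⟨c, hc1, hc2, hc3⟩ := hτesc j
    have hjc : branchNode H x c ∈ Tb j := hj c
    rw [hbx c (j+1) hc2] at hjc
    exact hc3 hjc
  refine ⟨key, ?_⟩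
  have hne : {c | ∃ F : Set (ℕ → ℕ), (∀ g, ∃ f ∈ F, evDomLE g f) ∧
      Cardinal.mk F = c}.Nonempty :=
    ⟨Cardinal.mk (Set.univ : Set (ℕ → ℕ)), Set.univ,
      fun g => ⟨g, Set.mem_univ g, Filter.Eventually.of_forall (fun n => le_rfl)⟩, rfl⟩
  refine le_csInf hne ?_
  rintro c ⟨F, hF, rfl⟩
  by_contra hcon
  push_neg at hcon
  obtain ⟨g, hg⟩ := key F hcon
  obtain ⟨fd, hf1, hf2⟩ := hF g
  exact hg fd hf1 hf2

end UnivForcing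
end

section
/- The σ-ideal ℐ_{𝔭^cmz_H} coincides with the σ-ideal of subsets of 𝒳 = ∏_{i<ω} H(i) generated by closed measure zero sets (with respect to the product measure). -/
open Set Filter MeasureTheory NNReal ENNReal

namespace UnivForcing

/-! ### Auxiliary lemmas for Proposition 2.13(3) -/

section Aux

variable {H : ℕ → ℕ}

theorem bn_length (x : XSp H) (n : ℕ) : (branchNode H x n).length = n :=
  List.length_ofFn

theorem bn_getElem (x : XSp H) {n i : ℕ} (h : i < (branchNode H x n).length) :
    (branchNode H x n)[i] = (x i : ℕ) := by
  simp [branchNode]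

theorem bn_take (x : XSp H) {m n : ℕ} (h : m ≤ n) :
    (branchNode H x n).take m = branchNode H x m := by
  apply List.ext_getElem
  · simp [bn_length, h]
  · intro i h1 h2
    rw [List.getElem_take, bn_getElem, bn_getElem]

theorem bn_prefix (x : XSp H) {m n : ℕ} (h : m ≤ n) :
    branchNode H x m <+: branchNode H x n := by
  rw [List.prefix_iff_eq_take, bn_length, bn_take x h]

theorem bn_isHNode (x : XSp H) (n : ℕ) : IsHNode H (branchNode H x n) := by
  intro i hi
  rw [List.getD_eq_getElem _ _ hi, bn_getElem]
  exact (x i).isLt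

theorem mem_cyl_self (x : XSp H) (n : ℕ) : x ∈ cyl H (branchNode H x n) := by
  show branchNode H x (branchNode H x n).length = branchNode H x n
  rw [bn_length]

theorem mem_cyl_of_prefix {x : XSp H} {η : Node} {n : ℕ}
    (h : η <+: branchNode H x n) : x ∈ cyl H η := by
  have hl : η.length ≤ n := by
    have := h.length_le; rwa [bn_length] at this
  show branchNode H x η.length = η
  rw [List.prefix_iff_eq_take] at h
  conv_rhs => rw [h]
  rw [bn_take x hl]

theorem prefix_of_mem_cyl {x : XSp H} {η : Node} {n : ℕ} (h : x ∈ cyl H η)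
    (hn : η.length ≤ n) : η <+: branchNode H x n := by
  have h' : branchNode H x η.length = η := h
  rw [← h']
  exact bn_prefix x hn

theorem cyl_isOpen (η : Node) : IsOpen (cyl H η) := by
  have : cyl H η =
      ⋂ i ∈ Finset.range η.length, (fun x : XSp H => x i) ⁻¹' {v | (v : ℕ) = η.getD i 0} := by
    ext x
    simp only [Set.mem_iInter, Set.mem_preimage, Set.mem_setOf_eq, Finset.mem_range]
    constructor
    · intro hx i hi
      have h' : branchNode H x η.length = η := hx
      have h2 : η[i] = (branchNode H x η.length)[i]'
          (by rw [bn_length]; exact hi) := List.getElem_of_eq h'.symm hi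
      rw [bn_getElem] at h2
      rw [List.getD_eq_getElem _ _ hi, h2]
    · intro hx
      show branchNode H x η.length = η
      apply List.ext_getElem (by rw [bn_length])
      intro i h1 h2
      rw [bn_getElem]
      rw [← List.getD_eq_getElem _ 0 h2]
      exact hx i h2
  rw [this]
  exact isOpen_biInter_finset fun i _ =>
    (continuous_apply i).isOpen_preimage _ (isOpen_discrete _)

theorem branches_isClosed (T : Set Node) : IsClosed (branches H T) := by
  rw [← isOpen_compl_iff, isOpen_iff_mem_nhds]
  intro x hx
  obtain ⟨n, hn⟩ : ∃ n, branchNode H x n ∉ T := by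
    by_contra h
    push_neg at h
    exact hx h
  refine Filter.mem_of_superset ((cyl_isOpen _).mem_nhds (mem_cyl_self x n)) ?_
  intro y hy hmem
  have h' : branchNode H y (branchNode H x n).length = branchNode H x n := hy
  rw [bn_length] at h'
  exact hn (h' ▸ hmem n)

/-- One-step extension in an infinite tree. -/
theorem step_ext {T : Set Node} (hT : IsInfTree H T) {η : Node} (hη : η ∈ T) :
    ∃ ν ∈ T, η <+: ν ∧ ν.length = η.length + 1 := by
  obtain ⟨ν', hν', hpre, hne⟩ := hT.2.2 η hη
  have hlt : η.length < ν'.length := by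
    rcases lt_or_eq_of_le hpre.length_le with h | h
    · exact h
    · exact absurd (List.IsPrefix.eq_of_length hpre h) hne
  refine ⟨ν'.take (η.length + 1), hT.1.2 ν' hν' _ (List.take_prefix _ _), ?_, ?_⟩
  · rw [List.prefix_iff_eq_take] at hpre ⊢
    rw [List.take_take]
    have hm : η.length ⊓ (η.length + 1) = η.length := by omega
    rw [hm, ← hpre]
  · rw [List.length_take]
    omega

/-- A chain of one-step extensions above a node. -/
noncomputable def chain {T : Set Node} (hT : IsInfTree H T) {η : Node} (hη : η ∈ T) :
    ℕ → {ν : Node // ν ∈ T}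
  | 0 => ⟨η, hη⟩
  | k + 1 => ⟨(step_ext hT (chain hT hη k).2).choose,
      (step_ext hT (chain hT hη k).2).choose_spec.1⟩

theorem chain_zero {T : Set Node} (hT : IsInfTree H T) {η : Node} (hη : η ∈ T) :
    (chain hT hη 0).1 = η := rfl

theorem chain_length {T : Set Node} (hT : IsInfTree H T) {η : Node} (hη : η ∈ T) (k : ℕ) :
    (chain hT hη k).1.length = η.length + k := by
  induction k with
  | zero => rfl
  | succ k ih =>
    have := (step_ext hT (chain hT hη k).2).choose_spec.2.2
    show (step_ext hT (chain hT hη k).2).choose.length = _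
    omega

theorem chain_prefix {T : Set Node} (hT : IsInfTree H T) {η : Node} (hη : η ∈ T)
    {j k : ℕ} (h : j ≤ k) : (chain hT hη j).1 <+: (chain hT hη k).1 := by
  induction k with
  | zero =>
    have : j = 0 := by omega
    subst this
    exact List.prefix_refl _
  | succ k ih =>
    rcases Nat.lt_or_ge j (k + 1) with h' | h'
    · exact (ih (by omega)).trans (step_ext hT (chain hT hη k).2).choose_spec.2.1
    · have : j = k + 1 := by omega
      subst this
      exact List.prefix_refl _

/-- The branch of `T` passing through a given node. -/
noncomputable def branchOf {T : Set Node} (hT : IsInfTree H T) {η : Node} (hη : η ∈ T) :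
    XSp H :=
  fun i => ⟨(chain hT hη (i + 1)).1.getD i 0, by
    have hlen : i < (chain hT hη (i + 1)).1.length := by rw [chain_length]; omega
    exact hT.2.1 _ (chain hT hη (i + 1)).2 i hlen⟩

theorem bn_branchOf {T : Set Node} (hT : IsInfTree H T) {η : Node} (hη : η ∈ T) (n : ℕ) :
    branchNode H (branchOf hT hη) n = (chain hT hη n).1.take n := by
  apply List.ext_getElem
  · rw [bn_length, List.length_take, chain_length]; omega
  · intro i h1 h2
    rw [bn_getElem, List.getElem_take]
    show (chain hT hη (i + 1)).1.getD i 0 = _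
    rw [bn_length] at h1
    have hlen : i < (chain hT hη (i + 1)).1.length := by rw [chain_length]; omega
    rw [List.getD_eq_getElem _ _ hlen]
    exact (chain_prefix hT hη h1).getElem hlen

theorem branchOf_mem {T : Set Node} (hT : IsInfTree H T) {η : Node} (hη : η ∈ T) :
    branchOf hT hη ∈ branches H T := by
  intro n
  rw [bn_branchOf]
  exact hT.1.2 _ (chain hT hη n).2 _ (List.take_prefix _ _)

theorem bn_branchOf_self {T : Set Node} (hT : IsInfTree H T) {η : Node} (hη : η ∈ T) :
    branchNode H (branchOf hT hη) η.length = η := by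
  rw [bn_branchOf]
  have hpre : η <+: (chain hT hη η.length).1 := chain_prefix hT hη (Nat.zero_le _)
  rw [List.prefix_iff_eq_take] at hpre
  exact hpre.symm

theorem exists_extension {T : Set Node} (hT : IsInfTree H T) {η : Node} (hη : η ∈ T)
    {N : ℕ} (hN : η.length ≤ N) : ∃ ν ∈ T, η <+: ν ∧ ν.length = N := by
  refine ⟨(chain hT hη (N - η.length)).1, (chain hT hη (N - η.length)).2,
    chain_prefix hT hη (Nat.zero_le _), ?_⟩
  rw [chain_length]; omega

theorem finite_hnodes (H : ℕ → ℕ) (b : ℕ) :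
    {η : Node | IsHNode H η ∧ η.length = b}.Finite := by
  apply Set.Finite.subset
    (Set.finite_range fun v : (i : Fin b) → Fin (H i) => List.ofFn fun i => (v i : ℕ))
  rintro η ⟨hHη, hlen⟩
  refine ⟨fun i => ⟨η.getD i 0, hHη i (by omega)⟩, ?_⟩
  apply List.ext_getElem
  · simp [hlen]
  · intro i h1 h2
    rw [List.getElem_ofFn]
    show η.getD i 0 = η[i]
    exact List.getD_eq_getElem η 0 h2

theorem finite_level {T : Set Node} (hT : IsInfTree H T) (b : ℕ) :
    (levelSet T b).Finite := by
  apply (finite_hnodes H b).subset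
  rintro η ⟨hη, hlen⟩
  exact ⟨hT.2.1 η hη, hlen⟩

theorem levelSet_below (T : Set Node) {n N : ℕ} (h : n ≤ N) :
    levelSet (below T N) n = levelSet T n := by
  ext η
  simp only [levelSet, below, Set.mem_setOf_eq]
  constructor
  · rintro ⟨⟨h1, _⟩, h3⟩; exact ⟨h1, h3⟩
  · rintro ⟨h1, h2⟩; exact ⟨⟨h1, by omega⟩, h2⟩

end Aux

section Count

variable {H : ℕ → ℕ}

theorem ncard_ext_le (H : ℕ → ℕ) (C : Node) {b : ℕ} (hC : C.length ≤ b) :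
    {η : Node | IsHNode H η ∧ η.length = b ∧ C <+: η}.ncard ≤
      ∏ i ∈ Finset.Ico C.length b, H i := by
  classical
  set l := C.length with hl
  set g : ((j : Fin (b - l)) → Fin (H (l + j))) → (Fin (b - l) → ℕ) :=
    fun v j => (v j : ℕ) with hg
  have hfin : (Set.range g).Finite := Set.finite_range g
  have h1 : {η : Node | IsHNode H η ∧ η.length = b ∧ C <+: η}.ncard ≤
      (Set.range g).ncard := by
    apply Set.ncard_le_ncard_of_injOn (fun η => fun j : Fin (b - l) => η.getD (l + j) 0)
    · rintro η ⟨hHη, hlen, hpre⟩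
      refine ⟨fun j => ⟨η.getD (l + j) 0, hHη (l + j) (by omega)⟩, rfl⟩
    · rintro η ⟨hHη, hlen, hpre⟩ η' ⟨hHη', hlen', hpre'⟩ hfeq
      apply List.ext_getElem (by omega)
      intro i h1 h2
      rcases Nat.lt_or_ge i l with hil | hil
      · exact (hpre.getElem (by omega)).symm.trans (hpre'.getElem (by omega))
      · have hj : i - l < b - l := by omega
        have := congrFun hfeq ⟨i - l, hj⟩
        simp only at this
        have hll : l + (i - l) = i := by omega
        rw [hll] at this
        rw [← List.getD_eq_getElem η 0 h1, ← List.getD_eq_getElem η' 0 h2]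
        exact this
  have h2 : (Set.range g).ncard ≤ ∏ i ∈ Finset.Ico l b, H i := by
    rw [← Set.image_univ]
    calc (g '' Set.univ).ncard ≤ (Set.univ : Set ((j : Fin (b - l)) → Fin (H (l + j)))).ncard :=
          Set.ncard_image_le Set.finite_univ
    _ = Nat.card ((j : Fin (b - l)) → Fin (H (l + j))) := Set.ncard_univ _
    _ = ∏ i ∈ Finset.Ico l b, H i := by
        rw [Nat.card_eq_fintype_card, Fintype.card_pi, Finset.prod_Ico_eq_prod_range,
          ← Fin.prod_univ_eq_prod_range (fun k => H (l + k)) (b - l)]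
        simp
  exact h1.trans h2

theorem two_pow_le_prod (hH : ∀ n, 2 ≤ H n) (n : ℕ) :
    2 ^ n ≤ ∏ i ∈ Finset.range n, H i := by
  calc 2 ^ n = ∏ _i ∈ Finset.range n, 2 := by rw [Finset.prod_const, Finset.card_range]
  _ ≤ ∏ i ∈ Finset.range n, H i := Finset.prod_le_prod' fun i _ => hH i

theorem prod_pos (hH : ∀ n, 2 ≤ H n) (n : ℕ) : 0 < ∏ i ∈ Finset.range n, H i :=
  Finset.prod_pos fun i _ => by have := hH i; omega

theorem aux_tel (t : ℝ) (ht : 0 < t) : 1 / (t + 1) ^ 2 ≤ 1 / t - 1 / (t + 1) := by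
  rw [div_sub_div _ _ (ne_of_gt ht) (by positivity),
    div_le_div_iff₀ (by positivity) (by positivity)]
  nlinarith

theorem sum_inv_sq_le {a b : ℕ} (ha : 1 ≤ a) (hab : a ≤ b) :
    ∑ i ∈ Finset.Icc a b, (1 : ℝ) / ((i : ℝ) + 1) ^ 2 ≤ 1 / (a : ℝ) := by
  have ha0 : (0 : ℝ) < a := by positivity
  have key : ∀ c : ℕ, a ≤ c →
      ∑ i ∈ Finset.Icc a c, (1 : ℝ) / ((i : ℝ) + 1) ^ 2 ≤ 1 / a - 1 / ((c : ℝ) + 1) := by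
    intro c hc
    induction c with
    | zero => omega
    | succ c ih =>
      rcases Nat.lt_or_ge a (c + 1) with h' | h'
      · have hac : a ≤ c := by omega
        have hc0 : (0 : ℝ) < (c : ℝ) + 1 := by positivity
        rw [Finset.sum_Icc_succ_top (by omega)]
        have hstep := aux_tel ((c : ℝ) + 1) (by positivity)
        have hih := ih hac
        push_cast
        push_cast at hih hstep
        linarith
      · have hac : a = c + 1 := by omega
        have hstep := aux_tel (a : ℝ) ha0
        rw [hac] at hstep ⊢
        rw [Finset.Icc_self, Finset.sum_singleton]
        push_cast
        push_cast at hstep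
        linarith
  have hb0 : (0 : ℝ) < 1 / ((b : ℝ) + 1) := by positivity
  linarith [key b hab]

theorem inv_sq_le_sum {a b : ℕ} (hab : a ≤ b) :
    (1 : ℝ) / ((a : ℝ) + 1) ^ 2 ≤ ∑ i ∈ Finset.Icc a b, (1 : ℝ) / ((i : ℝ) + 1) ^ 2 :=
  Finset.single_le_sum (f := fun i : ℕ => (1 : ℝ) / ((i : ℝ) + 1) ^ 2)
    (fun i _ => by positivity) (Finset.mem_Icc.2 ⟨le_rfl, hab⟩)

theorem ncard_biUnion_le {α ι : Type*} (F : Finset ι) (f : ι → Set α)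
    (hf : ∀ i ∈ F, (f i).Finite) :
    (⋃ i ∈ F, f i).ncard ≤ ∑ i ∈ F, (f i).ncard := by
  classical
  induction F using Finset.induction with
  | empty => simp
  | insert a s hnotmem ih =>
    rw [Finset.set_biUnion_insert, Finset.sum_insert hnotmem]
    refine (Set.ncard_union_le _ _).trans ?_
    have := ih fun i hi => hf i (Finset.mem_insert_of_mem hi)
    omega

end Count

section NullOfNarrow

variable {H : ℕ → ℕ}

theorem cylMass_le_pow (hH : ∀ n, 2 ≤ H n) (η : Node) :
    cylMass H η ≤ (2 : ℝ≥0∞)⁻¹ ^ η.length := by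
  rw [cylMass, ← ENNReal.inv_pow, ENNReal.inv_le_inv]
  calc (2 : ℝ≥0∞) ^ η.length = ∏ _i ∈ Finset.range η.length, (2 : ℝ≥0∞) := by
        rw [Finset.prod_const, Finset.card_range]
  _ ≤ ∏ i ∈ Finset.range η.length, (H i : ℝ≥0∞) :=
      Finset.prod_le_prod' fun i _ => by exact_mod_cast hH i

theorem tsum_pow_tail (b : ℕ) :
    ∑' j : ℕ, ((2 : ℝ≥0∞)⁻¹) ^ (b + j + 1) = (2 : ℝ≥0∞)⁻¹ ^ b := by
  have h2 : ∀ j : ℕ, ((2 : ℝ≥0∞)⁻¹) ^ (b + j + 1) = (2 : ℝ≥0∞)⁻¹ ^ (b + 1) * ((2 : ℝ≥0∞)⁻¹) ^ j :=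
    fun j => by rw [← pow_add]; ring_nf
  calc ∑' j : ℕ, ((2 : ℝ≥0∞)⁻¹) ^ (b + j + 1)
      = ∑' j : ℕ, (2 : ℝ≥0∞)⁻¹ ^ (b + 1) * ((2 : ℝ≥0∞)⁻¹) ^ j := by simp_rw [h2]
  _ = (2 : ℝ≥0∞)⁻¹ ^ (b + 1) * ∑' j : ℕ, ((2 : ℝ≥0∞)⁻¹) ^ j := ENNReal.tsum_mul_left
  _ = (2 : ℝ≥0∞)⁻¹ ^ (b + 1) * 2 := by
      rw [ENNReal.tsum_geometric, ENNReal.one_sub_inv_two, inv_inv]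
  _ = (2 : ℝ≥0∞)⁻¹ ^ b := by
      rw [pow_succ, mul_assoc, ENNReal.inv_mul_cancel two_ne_zero ENNReal.ofNat_ne_top, mul_one]

theorem pow_inv_two_le (n : ℕ) : ((2 : ℝ≥0∞)⁻¹) ^ n ≤ ((n : ℕ) : ℝ≥0∞)⁻¹ := by
  rw [← ENNReal.inv_pow, ENNReal.inv_le_inv]
  exact_mod_cast (Nat.lt_two_pow_self (n := n)).le

theorem gcmz_ratio {S : Set Node} {a b : ℕ} (h : (S, a, b) ∈ Gcmz H) (hab : a < b) :
    ((levelSet S b).ncard : ℝ) / (∏ i ∈ Finset.range b, (H i : ℝ)) ≤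
      ∑ i ∈ Finset.Icc a b, 1 / ((i : ℝ) + 1) ^ 2 := by
  simp only [Gcmz, Set.mem_setOf_eq] at h
  rcases h with h0 | ⟨S', a', b', N, heq, _, _, _, hratio⟩
  · exfalso
    rw [Prod.mk.injEq, Prod.mk.injEq] at h0
    omega
  · rw [Prod.mk.injEq, Prod.mk.injEq] at heq
    obtain ⟨h1, h2, h3⟩ := heq
    subst h1; subst h2; subst h3
    exact hratio

theorem prodNull_of_narrow (hH : ∀ n, 2 ≤ H n) {T : Set Node} (hT : IsInfTree H T)
    (hnar : IsNarrowG (Gcmz H) T) : ProdNull H (branches H T) := by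
  classical
  intro ε hε
  obtain ⟨n₀, hn₀⟩ := ENNReal.exists_inv_nat_lt (a := ε / 2) (by
    intro h
    rcases ENNReal.div_eq_zero_iff.1 h with h | h
    · exact hε.ne' h
    · exact ENNReal.ofNat_ne_top h)
  obtain ⟨a, ham, b, hab, hmem⟩ := hnar (max n₀ 1)
  have ha1 : 1 ≤ a := le_trans (le_max_right _ _) ham
  have han : n₀ ≤ a := le_trans (le_max_left _ _) ham
  have hratio := gcmz_ratio hmem hab
  rw [levelSet_below T (by omega)] at hratio
  set k := (levelSet T b).ncard with hk
  have hPposn := prod_pos hH b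
  have hkey : k * a ≤ ∏ i ∈ Finset.range b, H i := by
    have hP : (0 : ℝ) < ∏ i ∈ Finset.range b, (H i : ℝ) := by
      exact_mod_cast hPposn
    have h1 : (k : ℝ) / (∏ i ∈ Finset.range b, (H i : ℝ)) ≤ 1 / (a : ℝ) :=
      hratio.trans (sum_inv_sq_le ha1 hab.le)
    rw [div_le_div_iff₀ hP (by positivity)] at h1
    have h2 : (k : ℝ) * a ≤ ∏ i ∈ Finset.range b, (H i : ℝ) := by linarith
    exact_mod_cast h2
  -- enumerate the level set
  have hfin := finite_level hT b
  set L := hfin.toFinset.toList with hLdef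
  have hkL : L.length = k := by
    rw [hLdef, Finset.length_toList, hk, Set.ncard_eq_toFinset_card _ hfin]
  have hmemL : ∀ η, η ∈ L ↔ η ∈ levelSet T b := by
    intro η
    rw [hLdef, Finset.mem_toList, Set.Finite.mem_toFinset]
  set C : ℕ → Node := fun n =>
    if h : n < L.length then L[n] else List.replicate (b + (n - L.length) + 1) 0 with hC
  -- basic facts about C
  have hClt : ∀ n (hn : n < L.length), C n = L[n] := fun n hn => by
    rw [hC]; exact dif_pos hn
  have hClen : ∀ n (hn : n < L.length), (C n).length = b := fun n hn => by
    rw [hClt n hn]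
    exact ((hmemL _).1 (List.getElem_mem hn)).2
  have hCge : ∀ j : ℕ, (C (j + L.length)).length = b + j + 1 := fun j => by
    rw [hC]
    simp only
    rw [dif_neg (by omega)]
    rw [List.length_replicate]
    omega
  refine ⟨C, ?_, ?_⟩
  · intro x hx
    have hmemb : branchNode H x b ∈ levelSet T b := ⟨hx b, bn_length x b⟩
    obtain ⟨n, hn, hEq⟩ := List.mem_iff_getElem.1 ((hmemL _).2 hmemb)
    refine Set.mem_iUnion.2 ⟨n, ?_⟩
    rw [hClt n hn, hEq]
    exact mem_cyl_self x b
  · -- total mass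
    have hPne0 : (∏ i ∈ Finset.range b, (H i : ℝ≥0∞)) ≠ 0 := by
      rw [Finset.prod_ne_zero_iff]
      intro i _
      have : H i ≠ 0 := by have := hH i; omega
      exact_mod_cast this
    have hPnetop : (∏ i ∈ Finset.range b, (H i : ℝ≥0∞)) ≠ ⊤ :=
      (ENNReal.prod_lt_top fun i _ => ENNReal.natCast_lt_top _).ne
    have hane0 : ((a : ℕ) : ℝ≥0∞) ≠ 0 := by
      exact_mod_cast (by omega : a ≠ 0)
    have hhalf : ((a : ℕ) : ℝ≥0∞)⁻¹ ≤ ε / 2 := by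
      refine le_trans ?_ hn₀.le
      rw [ENNReal.inv_le_inv]
      exact_mod_cast han
    have hfront : ∑ n ∈ Finset.range L.length, cylMass H (C n) ≤ ε / 2 := by
      have heq : ∑ n ∈ Finset.range L.length, cylMass H (C n)
          = (k : ℝ≥0∞) * (∏ i ∈ Finset.range b, (H i : ℝ≥0∞))⁻¹ := by
        rw [Finset.sum_congr rfl (g := fun _ => (∏ i ∈ Finset.range b, (H i : ℝ≥0∞))⁻¹)
          (fun n hn => by rw [cylMass, hClen n (Finset.mem_range.1 hn)])]
        rw [Finset.sum_const, Finset.card_range, hkL, nsmul_eq_mul]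
      rw [heq]
      have hcast : (∏ i ∈ Finset.range b, (H i : ℝ≥0∞))
          = ((∏ i ∈ Finset.range b, H i : ℕ) : ℝ≥0∞) := by push_cast; rfl
      have hk1 : (k : ℝ≥0∞) ≤ (∏ i ∈ Finset.range b, (H i : ℝ≥0∞)) / (a : ℕ) := by
        rw [ENNReal.le_div_iff_mul_le (Or.inl hane0) (Or.inl (ENNReal.natCast_ne_top a))]
        rw [hcast]
        exact_mod_cast hkey
      refine le_trans ?_ hhalf
      calc (k : ℝ≥0∞) * (∏ i ∈ Finset.range b, (H i : ℝ≥0∞))⁻¹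
          ≤ ((∏ i ∈ Finset.range b, (H i : ℝ≥0∞)) / (a : ℕ)) *
            (∏ i ∈ Finset.range b, (H i : ℝ≥0∞))⁻¹ := mul_le_mul_left hk1 _
      _ = ((a : ℕ) : ℝ≥0∞)⁻¹ * ((∏ i ∈ Finset.range b, (H i : ℝ≥0∞)) *
            (∏ i ∈ Finset.range b, (H i : ℝ≥0∞))⁻¹) := by
          rw [ENNReal.div_eq_inv_mul]; ring
      _ = ((a : ℕ) : ℝ≥0∞)⁻¹ := by
          rw [ENNReal.mul_inv_cancel hPne0 hPnetop, mul_one]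
    have htail : ∑' j : ℕ, cylMass H (C (j + L.length)) ≤ ε / 2 := by
      have h1 : ∑' j : ℕ, cylMass H (C (j + L.length))
          ≤ ∑' j : ℕ, ((2 : ℝ≥0∞)⁻¹) ^ (b + j + 1) := by
        refine ENNReal.tsum_le_tsum fun j => ?_
        have := cylMass_le_pow hH (C (j + L.length))
        rwa [hCge j] at this
      rw [tsum_pow_tail b] at h1
      refine h1.trans ?_
      calc (2 : ℝ≥0∞)⁻¹ ^ b ≤ (2 : ℝ≥0∞)⁻¹ ^ a :=
            pow_le_pow_of_le_one zero_le (ENNReal.inv_le_one.2 one_le_two) hab.le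
      _ ≤ ((a : ℕ) : ℝ≥0∞)⁻¹ := pow_inv_two_le a
      _ ≤ ε / 2 := hhalf
    calc ∑' n, cylMass H (C n)
        = ∑ n ∈ Finset.range L.length, cylMass H (C n) +
          ∑' j : ℕ, cylMass H (C (j + L.length)) :=
          (Summable.sum_add_tsum_nat_add' ENNReal.summable).symm
    _ ≤ ε / 2 + ε / 2 := add_le_add hfront htail
    _ = ε := ENNReal.add_halves ε

end NullOfNarrow

section NarrowOfNull

variable {H : ℕ → ℕ}

theorem finTree_below (hH : ∀ n, 2 ≤ H n) {T : Set Node} (hT : IsInfTree H T) (N : ℕ) :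
    IsFinTree H (below T N) N := by
  refine ⟨⟨⟨hT.1.1, by simp⟩, ?_⟩, ?_, ?_⟩
  · rintro η ⟨hη, hlen⟩ ν hpre
    exact ⟨hT.1.2 η hη ν hpre, le_trans hpre.length_le hlen⟩
  · rintro η ⟨hη, hlen⟩
    exact ⟨hT.2.1 η hη, hlen⟩
  · rintro η ⟨hη, hlen⟩
    obtain ⟨ν, hν, hpre, hlenν⟩ := exists_extension hT hη hlen
    exact ⟨ν, ⟨hν, le_of_eq hlenν⟩, hpre, hlenν⟩

theorem narrow_of_prodNull (hH : ∀ n, 2 ≤ H n) {T : Set Node} (hT : IsInfTree H T)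
    (hnull : ProdNull H (branches H T)) : IsNarrowG (Gcmz H) T := by
  classical
  intro m
  refine ⟨m, le_rfl, ?_⟩
  set ε := (((m + 1) ^ 2 : ℕ) : ℝ≥0∞)⁻¹ with hεdef
  have hεpos : 0 < ε := by
    rw [hεdef, ENNReal.inv_pos]
    exact ENNReal.natCast_ne_top _
  obtain ⟨C, hcov, hsum⟩ := hnull ε hεpos
  have hcomp : IsCompact (branches H T) := (branches_isClosed T).isCompact
  obtain ⟨F, hF⟩ := hcomp.elim_finite_subcover (fun n => cyl H (C n))
    (fun n => cyl_isOpen (C n)) hcov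
  set b := max (m + 1) (F.sup fun n => (C n).length) with hbdef
  have hmb : m < b := lt_of_lt_of_le (Nat.lt_succ_self m) (le_max_left _ _)
  have hlenb : ∀ n ∈ F, (C n).length ≤ b :=
    fun n hn => le_trans (Finset.le_sup (f := fun n => (C n).length) hn) (le_max_right _ _)
  refine ⟨b, hmb, ?_⟩
  -- the ratio inequality
  set Ext : ℕ → Set Node := fun n => {η | IsHNode H η ∧ η.length = b ∧ C n <+: η} with hExt
  have hsub : levelSet T b ⊆ ⋃ n ∈ F, Ext n := by
    rintro η ⟨hη, hlen⟩
    have hx := branchOf_mem hT hη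
    obtain ⟨n, hnF, hxc⟩ := Set.mem_iUnion₂.1 (hF hx)
    refine Set.mem_iUnion₂.2 ⟨n, hnF, hT.2.1 η hη, hlen, ?_⟩
    have hpre : C n <+: branchNode H (branchOf hT hη) b :=
      prefix_of_mem_cyl hxc (hlenb n hnF)
    have hself : branchNode H (branchOf hT hη) b = η := by
      rw [← hlen]
      exact bn_branchOf_self hT hη
    rwa [hself] at hpre
  have hcount : (levelSet T b).ncard ≤
      ∑ n ∈ F, ∏ i ∈ Finset.Ico (C n).length b, H i := by
    have hfinU : (⋃ n ∈ F, Ext n).Finite :=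
      Set.Finite.biUnion F.finite_toSet fun n _ =>
        (finite_hnodes H b).subset fun η hη => ⟨hη.1, hη.2.1⟩
    calc (levelSet T b).ncard ≤ (⋃ n ∈ F, Ext n).ncard := Set.ncard_le_ncard hsub hfinU
    _ ≤ ∑ n ∈ F, (Ext n).ncard := ncard_biUnion_le F Ext fun n _ =>
        (finite_hnodes H b).subset fun η hη => ⟨hη.1, hη.2.1⟩
    _ ≤ ∑ n ∈ F, ∏ i ∈ Finset.Ico (C n).length b, H i :=
        Finset.sum_le_sum fun n hn => ncard_ext_le H (C n) (hlenb n hn)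
  -- pass to the reals
  have hPr : (0 : ℝ) < ∏ i ∈ Finset.range b, (H i : ℝ) := by
    exact_mod_cast prod_pos hH b
  have hchain : ((levelSet T b).ncard : ℝ) / (∏ i ∈ Finset.range b, (H i : ℝ)) ≤
      ∑ n ∈ F, (∏ i ∈ Finset.range (C n).length, (H i : ℝ))⁻¹ := by
    have h1 : ((levelSet T b).ncard : ℝ) ≤
        ∑ n ∈ F, ∏ i ∈ Finset.Ico (C n).length b, (H i : ℝ) := by
      exact_mod_cast hcount
    rw [div_le_iff₀ hPr]
    rw [Finset.sum_mul]
    refine h1.trans (Finset.sum_le_sum fun n hn => ?_)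
    rw [← Finset.prod_range_mul_prod_Ico (fun i => (H i : ℝ)) (hlenb n hn)]
    have hp0 : (0 : ℝ) < ∏ i ∈ Finset.range (C n).length, (H i : ℝ) := by
      exact_mod_cast prod_pos hH (C n).length
    rw [inv_mul_cancel_left₀ (ne_of_gt hp0)]
  -- bound the sum of masses
  have hεne : ε ≠ ⊤ := by
    rw [hεdef]
    simp only [ne_eq, ENNReal.inv_eq_top, Nat.cast_eq_zero]
    positivity
  have hsumF : ∑ n ∈ F, cylMass H (C n) ≤ ε := (ENNReal.sum_le_tsum F).trans hsum
  have hCne0 : ∀ n : ℕ, (∏ i ∈ Finset.range (C n).length, (H i : ℝ≥0∞)) ≠ 0 := by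
    intro n
    rw [Finset.prod_ne_zero_iff]
    intro i _
    have : H i ≠ 0 := by have := hH i; omega
    exact_mod_cast this
  have hmassR : ∑ n ∈ F, (∏ i ∈ Finset.range (C n).length, (H i : ℝ))⁻¹ ≤
      (((m + 1) ^ 2 : ℕ) : ℝ)⁻¹ := by
    have h1 := ENNReal.toReal_mono hεne hsumF
    rw [ENNReal.toReal_sum (fun n _ => by
      rw [cylMass, ne_eq, ENNReal.inv_eq_top]
      exact hCne0 n)] at h1
    have hterm : ∀ n : ℕ, (cylMass H (C n)).toReal =
        (∏ i ∈ Finset.range (C n).length, (H i : ℝ))⁻¹ := by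
      intro n
      rw [cylMass, ENNReal.toReal_inv]
      congr 1
      rw [ENNReal.toReal_prod]
      exact Finset.prod_congr rfl fun i _ => ENNReal.toReal_natCast _
    have hεtr : ε.toReal = (((m + 1) ^ 2 : ℕ) : ℝ)⁻¹ := by
      rw [hεdef, ENNReal.toReal_inv, ENNReal.toReal_natCast]
    rw [hεtr] at h1
    calc ∑ n ∈ F, (∏ i ∈ Finset.range (C n).length, (H i : ℝ))⁻¹
        = ∑ n ∈ F, (cylMass H (C n)).toReal := by
          exact Finset.sum_congr rfl fun n _ => (hterm n).symm
    _ ≤ (((m + 1) ^ 2 : ℕ) : ℝ)⁻¹ := h1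
  have hratio : ((levelSet T b).ncard : ℝ) / (∏ i ∈ Finset.range b, (H i : ℝ)) ≤
      ∑ i ∈ Finset.Icc m b, 1 / ((i : ℝ) + 1) ^ 2 := by
    refine (hchain.trans hmassR).trans ?_
    refine le_trans ?_ (inv_sq_le_sum hmb.le)
    rw [one_div]
    push_cast
    exact le_rfl
  -- assemble the Gcmz membership
  refine Or.inr ⟨below T (b + 1), m, b, b + 1, rfl, finTree_below hH hT (b + 1),
    by omega, by omega, ?_⟩
  rw [levelSet_below T (by omega)]
  exact hratio

end NarrowOfNull

section Assemble

variable {H : ℕ → ℕ}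

/-- The tree of initial segments of points of `A`. -/
def prefixTree (H : ℕ → ℕ) (A : Set (XSp H)) : Set Node :=
  {η | ∃ x ∈ A, branchNode H x η.length = η}

theorem prefixTree_isInfTree {A : Set (XSp H)} (hne : A.Nonempty) :
    IsInfTree H (prefixTree H A) := by
  obtain ⟨x₀, hx₀⟩ := hne
  refine ⟨⟨⟨x₀, hx₀, ?_⟩, ?_⟩, ?_, ?_⟩
  · simp [branchNode]
  · rintro η ⟨x, hx, hbn⟩ ν hpre
    have hl : ν.length ≤ η.length := hpre.length_le
    rw [List.prefix_iff_eq_take] at hpre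
    refine ⟨x, hx, ?_⟩
    calc branchNode H x ν.length = (branchNode H x η.length).take ν.length :=
          (bn_take x hl).symm
    _ = η.take ν.length := by rw [hbn]
    _ = ν := hpre.symm
  · rintro η ⟨x, hx, hbn⟩
    rw [← hbn]
    exact bn_isHNode x _
  · rintro η ⟨x, hx, hbn⟩
    refine ⟨branchNode H x (η.length + 1), ⟨x, hx, by rw [bn_length]⟩, ?_, ?_⟩
    · conv_lhs => rw [← hbn]
      exact bn_prefix x (Nat.le_succ _)
    · intro heq
      have := congrArg List.length heq
      rw [bn_length] at this
      omega

theorem subset_branches_prefixTree (A : Set (XSp H)) :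
    A ⊆ branches H (prefixTree H A) := by
  intro x hx n
  exact ⟨x, hx, by rw [bn_length]⟩

theorem branches_prefixTree_eq {A : Set (XSp H)} (hA : IsClosed A) :
    branches H (prefixTree H A) = A := by
  refine subset_antisymm ?_ (subset_branches_prefixTree A)
  intro x hx
  have h : ∀ n : ℕ, ∃ y ∈ A, branchNode H y n = branchNode H x n := by
    intro n
    obtain ⟨y, hy, hbn⟩ := hx n
    rw [bn_length] at hbn
    exact ⟨y, hy, hbn⟩
  choose y hyA hybn using h
  have htd : Filter.Tendsto y atTop (nhds x) := by
    rw [tendsto_pi_nhds]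
    intro i
    refine Filter.Tendsto.congr' ?_ tendsto_const_nhds
    filter_upwards [Filter.eventually_ge_atTop (i + 1)] with n hn
    have hidx : i < (branchNode H (y n) n).length := by rw [bn_length]; omega
    have hidx' : i < (branchNode H x n).length := by rw [bn_length]; omega
    have h1 := List.getElem_of_eq (hybn n) hidx
    rw [bn_getElem, bn_getElem] at h1
    exact Fin.ext h1.symm
  exact hA.mem_of_tendsto htd (Filter.Eventually.of_forall fun n => hyA n)

theorem prodNull_singleton (hH : ∀ n, 2 ≤ H n) (x : XSp H) :
    ProdNull H ({x} : Set (XSp H)) := by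
  intro ε hε
  obtain ⟨n₀, hn₀⟩ := ENNReal.exists_inv_nat_lt hε.ne'
  refine ⟨fun j => branchNode H x (n₀ + j + 1), ?_, ?_⟩
  · rintro y rfl
    exact Set.mem_iUnion.2 ⟨0, mem_cyl_self y (n₀ + 0 + 1)⟩
  · calc ∑' j : ℕ, cylMass H (branchNode H x (n₀ + j + 1))
        ≤ ∑' j : ℕ, ((2 : ℝ≥0∞)⁻¹) ^ (n₀ + j + 1) := by
          refine ENNReal.tsum_le_tsum fun j => ?_
          have := cylMass_le_pow hH (branchNode H x (n₀ + j + 1))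
          rwa [bn_length] at this
    _ = (2 : ℝ≥0∞)⁻¹ ^ n₀ := tsum_pow_tail n₀
    _ ≤ ((n₀ : ℕ) : ℝ≥0∞)⁻¹ := pow_inv_two_le n₀
    _ ≤ ε := hn₀.le

theorem exists_narrowClosed_superset (hH : ∀ n, 2 ≤ H n) {A : Set (XSp H)}
    (hA : IsClosed A) (hnull : ProdNull H A) :
    ∃ B, NarrowClosedG H (Gcmz H) B ∧ A ⊆ B := by
  rcases A.eq_empty_or_nonempty with rfl | hne
  · set x : XSp H := fun i => ⟨0, by have := hH i; omega⟩ with hxdef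
    have hne' : ({x} : Set (XSp H)).Nonempty := ⟨x, rfl⟩
    have hinf := prefixTree_isInfTree (H := H) hne'
    have heq : branches H (prefixTree H {x}) = {x} :=
      branches_prefixTree_eq isClosed_singleton
    refine ⟨branches H (prefixTree H {x}),
      ⟨prefixTree H {x}, hinf, ?_, rfl⟩, Set.empty_subset _⟩
    apply narrow_of_prodNull hH hinf
    rw [heq]
    exact prodNull_singleton hH x
  · have hinf := prefixTree_isInfTree (H := H) hne
    have heq : branches H (prefixTree H A) = A := branches_prefixTree_eq hA
    refine ⟨branches H (prefixTree H A),
      ⟨prefixTree H A, hinf, ?_, rfl⟩, subset_branches_prefixTree A⟩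
    apply narrow_of_prodNull hH hinf
    rw [heq]
    exact hnull

end Assemble
/-- Proposition 2.13(3): `ℐ_{𝔭^cmz_H}` is exactly the σ-ideal generated by closed
null subsets of 𝒳 (with respect to the product measure). -/
theorem Ip_cmz_eq_closed_null_ideal (H : ℕ → ℕ) (hH : ∀ n, 2 ≤ H n) :
    IpG H (Gcmz H) =
      {A : Set (XSp H) | ∃ f : ℕ → Set (XSp H),
        (∀ n, IsClosed (f n) ∧ ProdNull H (f n)) ∧ A ⊆ ⋃ n, f n} := by
  ext A
  simp only [IpG, Set.mem_setOf_eq]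
  constructor
  · rintro ⟨f, hf, hsub⟩
    refine ⟨f, fun n => ?_, hsub⟩
    obtain ⟨T, hinf, hnar, heq⟩ := hf n
    constructor
    · rw [heq]
      exact branches_isClosed T
    · rw [heq]
      exact prodNull_of_narrow hH hinf hnar
  · rintro ⟨f, hf, hsub⟩
    choose B hB hBsub using fun n => exists_narrowClosed_superset hH (hf n).1 (hf n).2
    refine ⟨B, hB, hsub.trans (Set.iUnion_mono hBsub)⟩

end UnivForcing
end
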